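/- arXiv:1912.02082 — 3 statements merged into one kernel-verified Lean document; each statement's English description precedes it below -/
import Mathlib

section
/- Let τ₁,…,τ_d > 0 and let 𝕋 = ∏_{i=1}^d (ℝ/τᵢℤ) be the d-dimensional torus with its quotient topology and Borel σ-algebra. Let (P_t)_{t≥0} be a Markov semigroup on 𝕋 satisfying: (Feller property) for every continuous f : 𝕋 → ℝ and every t ≥ 0 the function P_t f is continuous, and ‖P_t f − f‖_∞ → 0 as t → 0+; (strong Feller property) for every t > 0 and every bounded Borel measurable f : 𝕋 → ℝ the function P_t f is continuous; (open-set irreducibility) for every t > 0, every x ∈ 𝕋 and every nonempty open set O ⊆ 𝕋 one has P_t(x, O) > 0. Then there exists a unique invariant Borel probability measure π on 𝕋, i.e. a unique Borel probability measure with ∫_𝕋 P_t(x, B) π(dx) = π(B) for all t ≥ 0 and all Borel sets B, and moreover there exist constants Γ > 0 and γ > 0 such that sup_{x ∈ 𝕋} sup_{B Borel} |P_t(x, B) − π(B)| ≤ Γ e^{−γ t} for all t ≥ 0. -/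
open MeasureTheory ProbabilityTheory Set Filter Topology
open scoped ENNReal NNReal
set_option linter.unusedSectionVars false
set_option maxHeartbeats 1000000

variable {E : Type*} [MeasurableSpace E] [TopologicalSpace E] [BorelSpace E]
  [SecondCountableTopology E] [Nonempty E]

lemma contKernel (Q : Kernel E E) [IsMarkovKernel Q]
    (hSF : ∀ f : E → ℝ, Measurable f → (∃ M, ∀ y, |f y| ≤ M) →
      Continuous fun x => ∫ y, f y ∂Q x)
    {f : E → ℝ≥0∞} (hf : Measurable f) {C : ℝ≥0∞} (hC : C ≠ ⊤) (hb : ∀ y, f y ≤ C) :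
    Continuous fun x => ∫⁻ y, f y ∂Q x := by
  have hfin : ∀ y, f y ≠ ⊤ := fun y => ((hb y).trans_lt hC.lt_top).ne
  have hcont := hSF (fun y => (f y).toReal) hf.ennreal_toReal
    ⟨C.toReal, fun y => by
      rw [abs_of_nonneg ENNReal.toReal_nonneg]
      exact ENNReal.toReal_mono hC (hb y)⟩
  have heq : (fun x => ∫⁻ y, f y ∂Q x)
      = fun x => ENNReal.ofReal (∫ y, (f y).toReal ∂Q x) := by
    funext x
    rw [integral_toReal hf.aemeasurable (ae_of_all _ fun y => (hfin y).lt_top),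
      ENNReal.ofReal_toReal]
    refine ((lintegral_mono hb).trans_lt ?_).ne
    rw [lintegral_const, measure_univ, mul_one]
    exact hC.lt_top
  rw [heq]
  exact ENNReal.continuous_ofReal.comp hcont

lemma contKernelSet (Q : Kernel E E) [IsMarkovKernel Q]
    (hSF : ∀ f : E → ℝ, Measurable f → (∃ M, ∀ y, |f y| ≤ M) →
      Continuous fun x => ∫ y, f y ∂Q x)
    {B : Set E} (hB : MeasurableSet B) : Continuous fun x => Q x B := by
  have h := contKernel Q hSF (f := B.indicator fun _ => (1 : ℝ≥0∞))
    (measurable_const.indicator hB) (C := 1) ENNReal.one_ne_top (fun y => by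
      by_cases hy : y ∈ B <;> simp [Set.indicator_apply, hy])
  have h2 : ∀ x : E, ∫⁻ y, B.indicator (fun _ => (1 : ℝ≥0∞)) y ∂Q x = Q x B := by
    intro x
    exact lintegral_indicator_one hB
  simpa only [h2] using h

lemma exists_ref (Q : Kernel E E) [IsMarkovKernel Q]
    (hSF : ∀ f : E → ℝ, Measurable f → (∃ M, ∀ y, |f y| ≤ M) →
      Continuous fun x => ∫ y, f y ∂Q x) :
    ∃ μ : Measure E, IsFiniteMeasure μ ∧ ∀ y, Q y ≪ μ := by
  set u := TopologicalSpace.denseSeq E with hu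
  refine ⟨Measure.sum (fun n => ((2 : ℝ≥0∞)⁻¹ ^ (n + 1)) • Q (u n)), ?_, ?_⟩
  · constructor
    rw [Measure.sum_apply _ MeasurableSet.univ]
    calc ∑' n, (((2 : ℝ≥0∞)⁻¹ ^ (n + 1)) • Q (u n)) univ
        ≤ ∑' n : ℕ, (2 : ℝ≥0∞)⁻¹ ^ n := by
          refine ENNReal.tsum_le_tsum fun n => ?_
          simp only [Measure.smul_apply, smul_eq_mul, measure_univ, mul_one]
          exact pow_le_pow_of_le_one (zero_le) (by norm_num) (Nat.le_succ n)
      _ = (1 - 2⁻¹)⁻¹ := ENNReal.tsum_geometric _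
      _ < ⊤ := by rw [ENNReal.one_sub_inv_two]; simp
  · intro y
    refine Measure.AbsolutelyContinuous.mk fun s hs h0 => ?_
    rw [Measure.sum_apply _ hs] at h0
    have hall : ∀ n, Q (u n) s = 0 := by
      intro n
      have hn := ENNReal.tsum_eq_zero.mp h0 n
      simp only [Measure.smul_apply, smul_eq_mul] at hn
      rcases mul_eq_zero.mp hn with h | h
      · exact absurd h (pow_ne_zero _ (ENNReal.inv_ne_zero.mpr (by simp)))
      · exact h
    have hcont : Continuous fun x => Q x s := contKernelSet Q hSF hs
    have hclosed : IsClosed {x | Q x s = 0} := by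
      have : {x | Q x s = 0} = (fun x => Q x s) ⁻¹' {0} := rfl
      rw [this]
      exact isClosed_singleton.preimage hcont
    have hsub : Set.range u ⊆ {x | Q x s = 0} := by
      rintro _ ⟨n, rfl⟩; exact hall n
    have hden : Dense (Set.range u) := (TopologicalSpace.denseRange_denseSeq E)
    exact hclosed.closure_subset_iff.mpr hsub (hden y)

/-- The master lemma: a strong Feller irreducible Markov kernel on a compact space
has 2-step transition densities with uniformly overlapping mass. -/
lemma torus_master [CompactSpace E] (Q : Kernel E E) [IsMarkovKernel Q]
    (hSF : ∀ f : E → ℝ, Measurable f → (∃ M, ∀ y, |f y| ≤ M) →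
      Continuous fun x => ∫ y, f y ∂Q x)
    (hIrr : ∀ x, ∀ O : Set E, IsOpen O → O.Nonempty → 0 < Q x O) :
    ∃ θ : ℝ, 2⁻¹ ≤ θ ∧ θ < 1 ∧ ∃ (μ : Measure E) (g : E → E → ℝ≥0∞),
      (∀ x, Measurable (g x)) ∧
      (∀ x (B : Set E), MeasurableSet B → ∫⁻ y, Q y B ∂Q x = ∫⁻ w in B, g x w ∂μ) ∧
      (∀ x y, ∫⁻ w, (g x w - g y w) ∂μ ≤ ENNReal.ofReal θ) := by
  obtain ⟨μ, hμfin, hac⟩ := exists_ref Q hSF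
  -- the jointly measurable density
  set q : E → E → ℝ≥0∞ := fun y w => Kernel.rnDeriv Q (Kernel.const E μ) y w with hqdef
  have hqm : Measurable fun p : E × E => q p.1 p.2 := Kernel.measurable_rnDeriv Q _
  have hqmy : ∀ y, Measurable fun w => q y w := fun y =>
    hqm.comp measurable_prodMk_left
  have hqmw : ∀ w, Measurable fun y => q y w := fun w =>
    hqm.comp measurable_prodMk_right
  have hrep : ∀ y (B : Set E), MeasurableSet B → Q y B = ∫⁻ w in B, q y w ∂μ := by
    intro y B hB
    have h1 : q y =ᵐ[μ] (Q y).rnDeriv μ := by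
      have := Kernel.rnDeriv_eq_rnDeriv_measure (κ := Q) (η := Kernel.const E μ) (a := y)
      simpa [Kernel.const_apply] using this
    calc Q y B = ∫⁻ w in B, (Q y).rnDeriv μ w ∂μ := (Measure.setLIntegral_rnDeriv (hac y) B).symm
      _ = ∫⁻ w in B, q y w ∂μ := lintegral_congr_ae (ae_restrict_of_ae h1.symm)
  have hq1 : ∀ y, ∫⁻ w, q y w ∂μ = 1 := by
    intro y
    have := hrep y univ MeasurableSet.univ
    rw [Measure.restrict_univ] at this
    rw [← this, measure_univ]
  -- the two-step density
  set g : E → E → ℝ≥0∞ := fun x w => ∫⁻ y, q y w ∂Q x with hgdef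
  have hgm : ∀ x, Measurable (g x) := by
    intro x
    exact Measurable.lintegral_prod_left' (f := fun p : E × E => q p.1 p.2) hqm
  have hQQ : ∀ x (B : Set E), MeasurableSet B →
      ∫⁻ y, Q y B ∂Q x = ∫⁻ w in B, g x w ∂μ := by
    intro x B hB
    calc ∫⁻ y, Q y B ∂Q x = ∫⁻ y, ∫⁻ w in B, q y w ∂μ ∂Q x :=
          lintegral_congr fun y => by rw [hrep y B hB]
      _ = ∫⁻ w in B, ∫⁻ y, q y w ∂Q x ∂μ :=
          lintegral_lintegral_swap (hqm.aemeasurable)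
  have hOne : ∀ x, ∫⁻ w, g x w ∂μ = 1 := by
    intro x
    have := hQQ x univ MeasurableSet.univ
    rw [Measure.restrict_univ] at this
    rw [← this]
    simp
  -- the asymmetric TV half-distance
  set S : E → E → ℝ≥0∞ := fun x y => ∫⁻ w, (g x w - g y w) ∂μ with hSdef
  have hSle : ∀ x y, S x y ≤ 1 := fun x y =>
    le_trans (lintegral_mono fun w => tsub_le_self) (hOne x).le
  have hSfin : ∀ x y, S x y ≠ ⊤ := fun x y => ((hSle x y).trans_lt (by norm_num)).ne
  -- non-degeneracy from irreducibility
  have hSlt : ∀ x y, S x y < 1 := by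
    intro x y
    rcases lt_or_ge (S x y) 1 with h | hcon
    · exact h
    exfalso
    have hminm : Measurable fun w => min (g x w) (g y w) := (hgm x).min (hgm y)
    have hadd : S x y + ∫⁻ w, min (g x w) (g y w) ∂μ = 1 := by
      rw [hSdef]
      rw [← lintegral_add_right _ hminm]
      calc ∫⁻ w, (g x w - g y w + min (g x w) (g y w)) ∂μ
          = ∫⁻ w, g x w ∂μ := lintegral_congr fun w => tsub_add_min
        _ = 1 := hOne x
    have hS1 : S x y = 1 := le_antisymm ((le_add_right le_rfl).trans hadd.le) hcon
    have hmin0 : ∫⁻ w, min (g x w) (g y w) ∂μ = 0 := by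
      have h1 : S x y + ∫⁻ w, min (g x w) (g y w) ∂μ = S x y + 0 := by
        rw [hadd, add_zero, hS1]
      exact (ENNReal.add_right_inj (hSfin x y)).mp h1
    have hae : ∀ᵐ w ∂μ, min (g x w) (g y w) = 0 := by
      have := (lintegral_eq_zero_iff hminm).mp hmin0
      filter_upwards [this] with w hw using hw
    set B : Set E := {w | g x w ≠ 0} with hBdef
    have hBmeas : MeasurableSet B := ((hgm x) (measurableSet_singleton 0)).compl
    -- ∫⁻ z, Q z B ∂ Q y = 0
    have h1 : ∫⁻ z, Q z B ∂Q y = 0 := by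
      rw [hQQ y B hBmeas]
      have hz : ∀ᵐ w ∂(μ.restrict B), g y w = 0 := by
        filter_upwards [ae_restrict_of_ae hae, ae_restrict_mem hBmeas] with w hw hwB
        rcases min_eq_iff.mp hw with ⟨h, -⟩ | ⟨h, -⟩
        · exact absurd h hwB
        · exact h
      rw [lintegral_congr_ae hz, lintegral_zero]
    -- propagate: Q z B = 0 for all z
    have hzero : ∀ z, Q z B = 0 := by
      have hc : Continuous fun z => Q z B := contKernelSet Q hSF hBmeas
      have haez : ∀ᵐ z ∂Q y, Q z B = 0 := by
        have := (lintegral_eq_zero_iff (Kernel.measurable_coe Q hBmeas)).mp h1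
        filter_upwards [this] with z hz using hz
      intro z
      by_contra hne
      have hU : IsOpen {z | Q z B ≠ 0} := by
        have : {z | Q z B ≠ 0} = (fun z => Q z B) ⁻¹' ({0}ᶜ) := rfl
        rw [this]
        exact (isOpen_compl_singleton).preimage hc
      have hpos := hIrr y _ hU ⟨z, hne⟩
      have h0 : Q y {z | Q z B ≠ 0} = 0 := by
        rw [ae_iff] at haez
        simpa using haez
      rw [h0] at hpos
      exact lt_irrefl 0 hpos
    -- but also ∫⁻ z, Q z B ∂ Q x = 1
    have h3 : ∫⁻ w in B, g x w ∂μ = 1 := by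
      have hcompl : ∫⁻ w in Bᶜ, g x w ∂μ = 0 := by
        have hz : ∀ᵐ w ∂μ.restrict Bᶜ, g x w = 0 := by
          filter_upwards [ae_restrict_mem hBmeas.compl] with w hw
          simpa [hBdef] using hw
        rw [lintegral_congr_ae hz, lintegral_zero]
      have h4 := lintegral_add_compl (g x) hBmeas (μ := μ)
      rw [hcompl, add_zero, hOne x] at h4
      exact h4
    have h5 := hQQ x B hBmeas
    rw [h3] at h5
    have h6 : ∫⁻ z, Q z B ∂Q x = 0 := by
      have : (fun z => Q z B) = fun _ => 0 := funext fun z => hzero z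
      rw [this, lintegral_zero]
    rw [h6] at h5
    exact one_ne_zero h5.symm
  -- ultra-Feller continuity
  have uf : ∀ x₀ : E, Tendsto (fun x => S x x₀ + S x₀ x) (𝓝 x₀) (𝓝 0) := by
    intro x₀
    -- truncated densities
    set gK : ℕ → E → E → ℝ≥0∞ := fun n x w => ∫⁻ y, min (q y w) n ∂Q x with hgKdef
    have hgKm : ∀ n x, Measurable (gK n x) := fun n x =>
      Measurable.lintegral_prod_left' (f := fun p : E × E => min (q p.1 p.2) n)
        (hqm.min measurable_const)
    have hgK_le_g : ∀ n x w, gK n x w ≤ g x w := fun n x w =>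
      lintegral_mono fun y => min_le_left _ _
    have hgK_le_n : ∀ n x w, gK n x w ≤ n := fun n x w => by
      calc gK n x w ≤ ∫⁻ _, (n : ℝ≥0∞) ∂Q x := lintegral_mono fun y => min_le_right _ _
        _ = n := by rw [lintegral_const, measure_univ, mul_one]
    -- the truncation error
    set hKf : ℕ → E → ℝ≥0∞ := fun n y => ∫⁻ w, (q y w - min (q y w) n) ∂μ with hKfdef
    have hKfm : ∀ n, Measurable (hKf n) := fun n =>
      Measurable.lintegral_prod_right' (f := fun p : E × E => q p.1 p.2 - min (q p.1 p.2) n)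
        (hqm.sub (hqm.min measurable_const))
    have hKf_le : ∀ n y, hKf n y ≤ 1 := fun n y =>
      le_trans (lintegral_mono fun w => tsub_le_self) (hq1 y).le
    set HK : ℕ → E → ℝ≥0∞ := fun n x => ∫⁻ y, hKf n y ∂Q x with hHKdef
    have hHKcont : ∀ n, Continuous (HK n) := fun n =>
      contKernel Q hSF (hKfm n) ENNReal.one_ne_top (hKf_le n)
    have hHKle : ∀ n x, HK n x ≤ 1 := fun n x => by
      calc HK n x ≤ ∫⁻ _, (1:ℝ≥0∞) ∂Q x := lintegral_mono (hKf_le n)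
        _ = 1 := by rw [lintegral_const, measure_univ, mul_one]
    -- HK n x₀ → 0
    have hHK0 : Tendsto (fun n => HK n x₀) atTop (𝓝 0) := by
      have hptw : ∀ y, Tendsto (fun n => hKf n y) atTop (𝓝 0) := by
        intro y
        have hae : ∀ᵐ w ∂μ, q y w < ⊤ :=
          ae_lt_top (hqmy y) (by rw [hq1 y]; exact ENNReal.one_ne_top)
        have h0 : (0 : ℝ≥0∞) = ∫⁻ w, (0:ℝ≥0∞) ∂μ := by rw [lintegral_zero]
        rw [hKfdef]
        simp only
        rw [show (𝓝 (0:ℝ≥0∞)) = 𝓝 (∫⁻ _, (0:ℝ≥0∞) ∂μ) by rw [lintegral_zero]]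
        refine tendsto_lintegral_of_dominated_convergence (fun w => q y w)
          (fun n => (hqmy y).sub ((hqmy y).min measurable_const))
          (fun n => ae_of_all _ fun w => tsub_le_self)
          (by rw [hq1 y]; exact ENNReal.one_ne_top) ?_
        filter_upwards [hae] with w hw
        have : ∀ᶠ n : ℕ in atTop, q y w - min (q y w) n = 0 := by
          obtain ⟨k, hk⟩ := ENNReal.exists_nat_gt hw.ne
          filter_upwards [eventually_ge_atTop k] with n hn
          have hle : q y w ≤ (n : ℝ≥0∞) := le_trans hk.le (by exact_mod_cast hn)
          rw [min_eq_left hle, tsub_self]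
        exact Tendsto.congr' (this.mono fun n h => h.symm) tendsto_const_nhds
      rw [show (𝓝 (0:ℝ≥0∞)) = 𝓝 (∫⁻ _, (0:ℝ≥0∞) ∂Q x₀) by rw [lintegral_zero]]
      exact tendsto_lintegral_of_dominated_convergence (fun _ => (1:ℝ≥0∞))
        (fun n => hKfm n) (fun n => ae_of_all _ (hKf_le n))
        (by rw [lintegral_const, measure_univ, mul_one]; exact ENNReal.one_ne_top)
        (ae_of_all _ hptw)
    -- W n x → 0 as x → x₀
    set W : ℕ → E → ℝ≥0∞ := fun n x =>
      ∫⁻ w, ((gK n x w - gK n x₀ w) + (gK n x₀ w - gK n x w)) ∂μ with hWdef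
    have hWtend : ∀ n, Tendsto (W n) (𝓝 x₀) (𝓝 0) := by
      intro n
      rw [show (𝓝 (0:ℝ≥0∞)) = 𝓝 (∫⁻ _, (0:ℝ≥0∞) ∂μ) by rw [lintegral_zero]]
      refine tendsto_lintegral_filter_of_dominated_convergence
        (fun _ => (n : ℝ≥0∞) + n)
        (Eventually.of_forall fun x =>
          ((hgKm n x).sub (hgKm n x₀)).add ((hgKm n x₀).sub (hgKm n x)))
        (Eventually.of_forall fun x => ae_of_all _ fun w =>
          add_le_add (le_trans tsub_le_self (hgK_le_n n x w))
            (le_trans tsub_le_self (hgK_le_n n x₀ w)))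
        (by
          rw [lintegral_const]
          exact ENNReal.mul_ne_top (by simp) (measure_ne_top μ univ)) ?_
      refine ae_of_all _ fun w => ?_
      have hcx : Tendsto (fun x => gK n x w) (𝓝 x₀) (𝓝 (gK n x₀ w)) := by
        have hcont := contKernel Q hSF (f := fun y => min (q y w) n)
          ((hqmw w).min measurable_const) (C := n) (by simp) (fun y => min_le_right _ _)
        exact hcont.tendsto x₀
      have hfin : gK n x₀ w ≠ ⊤ := ((hgK_le_n n x₀ w).trans_lt (by simp)).ne
      have h1 : Tendsto (fun x => gK n x w - gK n x₀ w) (𝓝 x₀) (𝓝 0) := by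
        have := ENNReal.Tendsto.sub hcx tendsto_const_nhds (Or.inr hfin)
        simpa using this
      have h2 : Tendsto (fun x => gK n x₀ w - gK n x w) (𝓝 x₀) (𝓝 0) := by
        have := ENNReal.Tendsto.sub (tendsto_const_nhds (x := gK n x₀ w)) hcx (Or.inr hfin)
        simpa using this
      simpa using h1.add h2
    -- the key domination
    have hkey : ∀ n x, S x x₀ + S x₀ x ≤ (HK n x + HK n x₀) + W n x := by
      intro n x
      have swap1 : ∀ z, ∫⁻ w, ∫⁻ y, (q y w - min (q y w) n) ∂Q z ∂μ = HK n z := by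
        intro z
        exact lintegral_lintegral_swap
          (((hqm.sub (hqm.min measurable_const)).comp measurable_swap).aemeasurable)
      have hg_gK : ∀ z, ∫⁻ w, (g z w - gK n z w) ∂μ ≤ HK n z := by
        intro z
        rw [← swap1 z]
        refine lintegral_mono fun w => ?_
        rw [tsub_le_iff_right]
        calc g z w = ∫⁻ y, q y w ∂Q z := rfl
          _ ≤ ∫⁻ y, ((q y w - min (q y w) n) + min (q y w) n) ∂Q z :=
              lintegral_mono fun y => le_tsub_add
          _ = ∫⁻ y, (q y w - min (q y w) n) ∂Q z + gK n z w := by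
              rw [lintegral_add_right _ ((hqmw w).min measurable_const)]
      have tri1 : S x x₀ ≤ ∫⁻ w, (g x w - gK n x w) ∂μ + ∫⁻ w, (gK n x w - gK n x₀ w) ∂μ := by
        rw [← lintegral_add_right _ (show Measurable fun w => gK n x w - gK n x₀ w from (hgKm n x).sub (hgKm n x₀))]
        refine lintegral_mono fun w => ?_
        calc g x w - g x₀ w ≤ g x w - gK n x w + (gK n x w - g x₀ w) := tsub_le_tsub_add_tsub
          _ ≤ g x w - gK n x w + (gK n x w - gK n x₀ w) :=
              add_le_add_right (tsub_le_tsub_left (hgK_le_g n x₀ w) _) _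
      have tri2 : S x₀ x ≤ ∫⁻ w, (g x₀ w - gK n x₀ w) ∂μ + ∫⁻ w, (gK n x₀ w - gK n x w) ∂μ := by
        rw [← lintegral_add_right _ (show Measurable fun w => gK n x₀ w - gK n x w from (hgKm n x₀).sub (hgKm n x))]
        refine lintegral_mono fun w => ?_
        calc g x₀ w - g x w ≤ g x₀ w - gK n x₀ w + (gK n x₀ w - g x w) := tsub_le_tsub_add_tsub
          _ ≤ g x₀ w - gK n x₀ w + (gK n x₀ w - gK n x w) :=
              add_le_add_right (tsub_le_tsub_left (hgK_le_g n x w) _) _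
      have hWsplit : W n x = ∫⁻ w, (gK n x w - gK n x₀ w) ∂μ
          + ∫⁻ w, (gK n x₀ w - gK n x w) ∂μ := by
        rw [hWdef]
        simp only
        rw [lintegral_add_left (show Measurable fun w => gK n x w - gK n x₀ w from (hgKm n x).sub (hgKm n x₀))]
      calc S x x₀ + S x₀ x
          ≤ (∫⁻ w, (g x w - gK n x w) ∂μ + ∫⁻ w, (gK n x w - gK n x₀ w) ∂μ)
            + (∫⁻ w, (g x₀ w - gK n x₀ w) ∂μ + ∫⁻ w, (gK n x₀ w - gK n x w) ∂μ) :=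
            add_le_add tri1 tri2
        _ ≤ (HK n x + ∫⁻ w, (gK n x w - gK n x₀ w) ∂μ)
            + (HK n x₀ + ∫⁻ w, (gK n x₀ w - gK n x w) ∂μ) :=
            add_le_add (add_le_add_left (hg_gK x) _) (add_le_add_left (hg_gK x₀) _)
        _ = (HK n x + HK n x₀) + W n x := by rw [hWsplit]; ring
    -- assemble
    rw [ENNReal.tendsto_nhds_zero]
    intro ε hε
    set ε' := min ε 1 with hε'def
    have hε'pos : 0 < ε' := lt_min hε one_pos
    have hε'fin : ε' ≠ ⊤ := (min_le_right ε 1).trans_lt (by norm_num) |>.ne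
    have hε'4pos : 0 < ε' / 4 := ENNReal.div_pos hε'pos.ne' (by norm_num)
    -- choose n
    obtain ⟨n, hn⟩ := (ENNReal.tendsto_nhds_zero.mp hHK0 (ε' / 4) hε'4pos).exists
    have hev1 : ∀ᶠ x in 𝓝 x₀, HK n x < HK n x₀ + ε' / 4 := by
      refine ((hHKcont n).tendsto x₀).eventually (Filter.Tendsto.eventually_lt_const ?_ tendsto_id)
      exact ENNReal.lt_add_right ((hHKle n x₀).trans_lt (by norm_num)).ne hε'4pos.ne'
    have hev2 : ∀ᶠ x in 𝓝 x₀, W n x ≤ ε' / 4 :=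
      ENNReal.tendsto_nhds_zero.mp (hWtend n) (ε' / 4) hε'4pos
    filter_upwards [hev1, hev2] with x h1 h2
    calc S x x₀ + S x₀ x ≤ (HK n x + HK n x₀) + W n x := hkey n x
      _ ≤ ((HK n x₀ + ε' / 4) + ε' / 4) + ε' / 4 :=
          add_le_add (add_le_add h1.le hn) h2
      _ ≤ ((ε' / 4 + ε' / 4) + ε' / 4) + ε' / 4 := by
          exact add_le_add_left (add_le_add_left (add_le_add_left hn _) _) _
      _ = 4 * (ε' / 4) := by ring
      _ ≤ ε' := ENNReal.mul_div_le
      _ ≤ ε := min_le_left _ _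
  -- continuity of the TV-type distance on E × E, compactness
  set D : E × E → ℝ := fun p => (S p.1 p.2).toReal with hDdef
  have hiter : ∀ a b c dd : E, S a b ≤ S a c + S c dd + S dd b := by
    intro a b c dd
    calc S a b ≤ ∫⁻ w, ((g a w - g c w) + (g c w - g dd w) + (g dd w - g b w)) ∂μ := by
          refine lintegral_mono fun w => ?_
          calc g a w - g b w ≤ (g a w - g dd w) + (g dd w - g b w) := tsub_le_tsub_add_tsub
            _ ≤ ((g a w - g c w) + (g c w - g dd w)) + (g dd w - g b w) :=
                add_le_add_left tsub_le_tsub_add_tsub _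
      _ = S a c + S c dd + S dd b := by
          rw [lintegral_add_right _ (show Measurable fun w => g dd w - g b w from (hgm dd).sub (hgm b)),
            lintegral_add_right _ (show Measurable fun w => g c w - g dd w from (hgm c).sub (hgm dd))]
  have hDcont : Continuous D := by
    rw [continuous_iff_continuousAt]
    intro p₀
    have herr : Tendsto (fun p : E × E => ((S p.1 p₀.1 + S p₀.1 p.1)
        + (S p.2 p₀.2 + S p₀.2 p.2)).toReal) (𝓝 p₀) (𝓝 0) := by
      have h1 : Tendsto (fun p : E × E => S p.1 p₀.1 + S p₀.1 p.1) (𝓝 p₀) (𝓝 0) :=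
        (uf p₀.1).comp continuousAt_fst
      have h2 : Tendsto (fun p : E × E => S p.2 p₀.2 + S p₀.2 p.2) (𝓝 p₀) (𝓝 0) :=
        (uf p₀.2).comp continuousAt_snd
      have h3 := h1.add h2
      rw [add_zero] at h3
      have h4 := (ENNReal.tendsto_toReal (by simp : (0:ℝ≥0∞) ≠ ⊤)).comp h3
      simpa [Function.comp_def] using h4
    rw [ContinuousAt, tendsto_iff_dist_tendsto_zero]
    refine squeeze_zero (fun p => dist_nonneg) (fun p => ?_) herr
    -- dist (D p) (D p₀) ≤ err
    set e : ℝ≥0∞ := (S p.1 p₀.1 + S p₀.1 p.1) + (S p.2 p₀.2 + S p₀.2 p.2) with hedef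
    have hefin : e ≠ ⊤ := by
      refine ENNReal.add_ne_top.mpr ⟨ENNReal.add_ne_top.mpr ⟨hSfin _ _, hSfin _ _⟩,
        ENNReal.add_ne_top.mpr ⟨hSfin _ _, hSfin _ _⟩⟩
    have hub1 : S p.1 p.2 ≤ S p₀.1 p₀.2 + e := by
      calc S p.1 p.2 ≤ S p.1 p₀.1 + S p₀.1 p₀.2 + S p₀.2 p.2 := hiter _ _ _ _
        _ ≤ S p₀.1 p₀.2 + e := by
            rw [hedef]
            calc S p.1 p₀.1 + S p₀.1 p₀.2 + S p₀.2 p.2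
                = S p₀.1 p₀.2 + (S p.1 p₀.1 + S p₀.2 p.2) := by ring
              _ ≤ S p₀.1 p₀.2 + ((S p.1 p₀.1 + S p₀.1 p.1) + (S p.2 p₀.2 + S p₀.2 p.2)) := by
                  gcongr
                  · exact le_add_right le_rfl
                  · exact le_add_left le_rfl
    have hub2 : S p₀.1 p₀.2 ≤ S p.1 p.2 + e := by
      calc S p₀.1 p₀.2 ≤ S p₀.1 p.1 + S p.1 p.2 + S p.2 p₀.2 := hiter _ _ _ _
        _ ≤ S p.1 p.2 + e := by
            rw [hedef]
            calc S p₀.1 p.1 + S p.1 p.2 + S p.2 p₀.2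
                = S p.1 p.2 + (S p₀.1 p.1 + S p.2 p₀.2) := by ring
              _ ≤ S p.1 p.2 + ((S p.1 p₀.1 + S p₀.1 p.1) + (S p.2 p₀.2 + S p₀.2 p.2)) := by
                  gcongr
                  · exact le_add_left le_rfl
                  · exact le_add_right le_rfl
    rw [Real.dist_eq, abs_sub_le_iff]
    constructor
    · have := ENNReal.toReal_mono (ENNReal.add_ne_top.mpr ⟨hSfin _ _, hefin⟩) hub1
      rw [ENNReal.toReal_add (hSfin _ _) hefin] at this
      linarith [this]
    · have := ENNReal.toReal_mono (ENNReal.add_ne_top.mpr ⟨hSfin _ _, hefin⟩) hub2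
      rw [ENNReal.toReal_add (hSfin _ _) hefin] at this
      linarith [this]
  obtain ⟨pm, -, hmax⟩ := isCompact_univ.exists_isMaxOn (univ_nonempty (α := E × E))
    hDcont.continuousOn
  refine ⟨max (D pm) 2⁻¹, le_max_right _ _, ?_, μ, g, hgm, hQQ, ?_⟩
  · refine max_lt ?_ (by norm_num)
    have := hSlt pm.1 pm.2
    have h1 : (S pm.1 pm.2).toReal < (1 : ℝ≥0∞).toReal :=
      ENNReal.toReal_strict_mono ENNReal.one_ne_top this
    simpa using h1
  · intro x y
    rw [ENNReal.le_ofReal_iff_toReal_le (hSfin x y)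
      (le_max_of_le_right (by norm_num))]
    exact le_trans (hmax (mem_univ (x, y))) (le_max_left _ _)


/-- one-step contraction of oscillations via a density overlap bound -/
lemma osc_contract {E : Type*} [MeasurableSpace E] [Nonempty E] (μ : Measure E)
    (ν₁ ν₂ : Measure E) [IsProbabilityMeasure ν₁] [IsProbabilityMeasure ν₂]
    (g₁ g₂ : E → ℝ≥0∞) (hg₁ : Measurable g₁) (hg₂ : Measurable g₂)
    (h₁ : ν₁ = μ.withDensity g₁) (h₂ : ν₂ = μ.withDensity g₂)
    (θ b : ℝ≥0∞) (hθ : ∫⁻ w, (g₁ w - g₂ w) ∂μ ≤ θ)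
    (F : E → ℝ≥0∞) (hF : Measurable F) (hF1 : ∀ z, F z ≤ 1) (hb : ∀ z w, F z - F w ≤ b) :
    ∫⁻ z, F z ∂ν₁ - ∫⁻ z, F z ∂ν₂ ≤ b * θ := by
  set m := ⨅ z, F z with hm
  have hmne : m ≠ ⊤ := by
    obtain ⟨z⟩ := ‹Nonempty E›
    exact ((iInf_le F z).trans_lt ((hF1 z).trans_lt (by norm_num))).ne
  have hFm : Measurable fun z => F z - m := hF.sub measurable_const
  have hshift : ∀ (ν : Measure E) (g : E → ℝ≥0∞), IsProbabilityMeasure ν → Measurable g →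
      ν = μ.withDensity g → ∫⁻ z, F z ∂ν = ∫⁻ w, (g * fun z => F z - m) w ∂μ + m := by
    intro ν g hp hgmeas hrepr
    have hFz : ∀ z, F z = (F z - m) + m := fun z => (tsub_add_cancel_of_le (iInf_le F z)).symm
    calc ∫⁻ z, F z ∂ν = ∫⁻ z, ((F z - m) + m) ∂ν := lintegral_congr fun z => hFz z
      _ = ∫⁻ z, (F z - m) ∂ν + m := by
          rw [lintegral_add_right _ measurable_const, lintegral_const, measure_univ, mul_one]
      _ = ∫⁻ w, (g * fun z => F z - m) w ∂μ + m := by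
          rw [hrepr, lintegral_withDensity_eq_lintegral_mul μ hgmeas hFm]
  rw [hshift ν₁ g₁ inferInstance hg₁ h₁, hshift ν₂ g₂ inferInstance hg₂ h₂]
  simp only [Pi.mul_apply]
  have hcancel : ∀ A B : ℝ≥0∞, (A + m) - (B + m) = A - B := by
    intro A B
    rw [tsub_add_eq_tsub_tsub, tsub_right_comm, ENNReal.add_sub_cancel_right hmne]
  rw [hcancel]
  -- bound A - B
  have hFb : ∀ w, F w - m ≤ b := by
    intro w
    rw [hm, ENNReal.sub_iInf]
    exact iSup_le fun z => hb w z
  have hstep : ∫⁻ w, g₁ w * (F w - m) ∂μ ≤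
      ∫⁻ w, ((F w - m) * (g₁ w - g₂ w) + g₂ w * (F w - m)) ∂μ :=
    lintegral_mono fun w => by
      calc g₁ w * (F w - m) = (F w - m) * g₁ w := mul_comm _ _
        _ ≤ (F w - m) * ((g₁ w - g₂ w) + g₂ w) := mul_le_mul_right le_tsub_add _
        _ = (F w - m) * (g₁ w - g₂ w) + g₂ w * (F w - m) := by ring
  have hstep2 : ∫⁻ w, g₁ w * (F w - m) ∂μ ≤
      ∫⁻ w, (F w - m) * (g₁ w - g₂ w) ∂μ + ∫⁻ w, g₂ w * (F w - m) ∂μ := by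
    rw [← lintegral_add_right _ (show Measurable fun w => g₂ w * (F w - m) from hg₂.mul hFm)]
    exact hstep
  refine tsub_le_iff_right.mpr (hstep2.trans (add_le_add_left ?_ _))
  calc ∫⁻ w, (F w - m) * (g₁ w - g₂ w) ∂μ
      ≤ ∫⁻ w, b * (g₁ w - g₂ w) ∂μ := lintegral_mono fun w => mul_le_mul_left (hFb w) _
    _ = b * ∫⁻ w, (g₁ w - g₂ w) ∂μ := lintegral_const_mul b (hg₁.sub hg₂)
    _ ≤ b * θ := mul_le_mul_right hθ b

/-- comparison of integrals of [0,1]-valued functions against a uniform TV-type bound -/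
lemma lintegral_le_of_tv {E : Type*} [MeasurableSpace E] (ρ σ : Measure E)
    [IsProbabilityMeasure ρ] [IsProbabilityMeasure σ]
    (d : ℝ≥0∞) (h : ∀ A : Set E, MeasurableSet A → ρ A ≤ σ A + d)
    (G : E → ℝ≥0∞) (hG : Measurable G) (hG1 : ∀ z, G z ≤ 1) :
    ∫⁻ z, G z ∂ρ ≤ ∫⁻ z, G z ∂σ + d := by
  have hGfin : ∀ z, G z ≠ ⊤ := fun z => ((hG1 z).trans_lt (by norm_num)).ne
  have hmble : Measurable fun z => (G z).toReal := hG.ennreal_toReal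
  have repr : ∀ ν : Measure E, ∫⁻ z, G z ∂ν = ∫⁻ s in Ioi (0:ℝ), ν {z | s < (G z).toReal} := by
    intro ν
    have h1 : ∫⁻ z, G z ∂ν = ∫⁻ z, ENNReal.ofReal ((G z).toReal) ∂ν :=
      lintegral_congr fun z => (ENNReal.ofReal_toReal (hGfin z)).symm
    rw [h1, lintegral_eq_lintegral_meas_lt ν (ae_of_all _ fun z => ENNReal.toReal_nonneg)
      hmble.aemeasurable]
  have hAmeas : ∀ s : ℝ, MeasurableSet {z | s < (G z).toReal} := fun s =>
    measurableSet_lt measurable_const hmble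
  have hempty : ∀ s : ℝ, 1 ≤ s → {z | s < (G z).toReal} = ∅ := by
    intro s hs
    ext z
    simp only [mem_setOf_eq, mem_empty_iff_false, iff_false, not_lt]
    calc (G z).toReal ≤ (1:ℝ≥0∞).toReal := ENNReal.toReal_mono ENNReal.one_ne_top (hG1 z)
      _ = 1 := by simp
      _ ≤ s := hs
  have hsplit : ∀ ν : Measure E, ∫⁻ s in Ioi (0:ℝ), ν {z | s < (G z).toReal}
      = ∫⁻ s in Ioc (0:ℝ) 1, ν {z | s < (G z).toReal} := by
    intro ν
    rw [← Ioc_union_Ioi_eq_Ioi (zero_le_one (α := ℝ)),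
      lintegral_union measurableSet_Ioi]
    · have hzero : ∫⁻ s in Ioi (1:ℝ), ν {z | s < (G z).toReal} = 0 := by
        rw [setLIntegral_congr_fun measurableSet_Ioi
          (fun (s : ℝ) (hs : (1:ℝ) < s) => by rw [hempty s hs.le, measure_empty]),
          lintegral_zero]
      rw [hzero, add_zero]
    · exact Ioc_disjoint_Ioi le_rfl
  rw [repr ρ, repr σ, hsplit ρ, hsplit σ]
  calc ∫⁻ s in Ioc (0:ℝ) 1, ρ {z | s < (G z).toReal}
      ≤ ∫⁻ s in Ioc (0:ℝ) 1, (σ {z | s < (G z).toReal} + d) :=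
        lintegral_mono fun s => h _ (hAmeas s)
    _ = (∫⁻ s in Ioc (0:ℝ) 1, σ {z | s < (G z).toReal}) + d * volume (Ioc (0:ℝ) 1) := by
        rw [lintegral_add_right _ measurable_const, setLIntegral_const]
    _ = (∫⁻ s in Ioc (0:ℝ) 1, σ {z | s < (G z).toReal}) + d := by
        rw [Real.volume_Ioc]
        norm_num


lemma integral_dist_le {E : Type*} [MeasurableSpace E] (ν : Measure E) [IsProbabilityMeasure ν]
    (f : E → ℝ) (hf : Measurable f) (M : ℝ) (hM : ∀ y, |f y| ≤ M)
    (a c : ℝ) (h : ∀ y, |f y - a| ≤ c) : |(∫ y, f y ∂ν) - a| ≤ c := by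
  have hint : Integrable f ν := by
    refine ⟨hf.aestronglyMeasurable, ?_⟩
    refine HasFiniteIntegral.of_bounded (C := M) (ae_of_all _ fun y => ?_)
    simpa [Real.norm_eq_abs] using hM y
  have h1 : (∫ y, f y ∂ν) - a = ∫ y, (f y - a) ∂ν := by
    rw [integral_sub hint (integrable_const a), integral_const]
    simp
  rw [h1]
  calc |∫ y, (f y - a) ∂ν| ≤ ∫ y, |f y - a| ∂ν := by
        simpa [Real.norm_eq_abs] using norm_integral_le_integral_norm (μ := ν) (fun y => f y - a)
    _ ≤ ∫ _, c ∂ν := integral_mono (hint.sub (integrable_const a)).abs (integrable_const c) h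
    _ = c := by simp

/-- A strong Feller, open-set irreducible Feller Markov semigroup on the
`d`-dimensional torus `∏ i, ℝ/τᵢℤ` admits a unique invariant probability measure `π`,
and is moreover exponentially ergodic in total variation, uniformly in the starting point. -/
theorem exists_unique_invariant_measure_of_torus_semigroup
    (d : ℕ) (hd : 1 ≤ d) (τ : Fin d → ℝ) [∀ i, Fact (0 < τ i)]
    (P : ℝ → Kernel (∀ i, AddCircle (τ i)) (∀ i, AddCircle (τ i)))
    [∀ t, IsMarkovKernel (P t)]
    (hP0 : ∀ x, P 0 x = Measure.dirac x)
    (hCK : ∀ s t : ℝ, 0 ≤ s → 0 ≤ t → ∀ f : (∀ i, AddCircle (τ i)) → ℝ,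
      Measurable f → (∃ M, ∀ y, |f y| ≤ M) →
      ∀ x, ∫ y, f y ∂(P (t + s) x) = ∫ y, (∫ z, f z ∂(P s y)) ∂(P t x))
    -- Feller property: `P_t` maps continuous functions to continuous functions
    (hFeller : ∀ f : (∀ i, AddCircle (τ i)) → ℝ, Continuous f → ∀ t : ℝ, 0 ≤ t →
      Continuous fun x => ∫ y, f y ∂(P t x))
    -- strong continuity at `0` in the supremum norm
    (hStrCont : ∀ f : (∀ i, AddCircle (τ i)) → ℝ, Continuous f → ∀ ε : ℝ, 0 < ε →
      ∃ δ > 0, ∀ t : ℝ, 0 < t → t < δ → ∀ x, |(∫ y, f y ∂(P t x)) - f x| ≤ ε)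
    -- strong Feller property
    (hSF : ∀ t : ℝ, 0 < t → ∀ f : (∀ i, AddCircle (τ i)) → ℝ, Measurable f →
      (∃ M, ∀ y, |f y| ≤ M) → Continuous fun x => ∫ y, f y ∂(P t x))
    -- open-set irreducibility
    (hIrr : ∀ t : ℝ, 0 < t → ∀ x, ∀ O : Set (∀ i, AddCircle (τ i)),
      IsOpen O → O.Nonempty → 0 < P t x O) :
    ∃ π : Measure (∀ i, AddCircle (τ i)),
      (IsProbabilityMeasure π ∧
        ∀ t : ℝ, 0 ≤ t → ∀ B : Set (∀ i, AddCircle (τ i)), MeasurableSet B →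
          ∫⁻ x, P t x B ∂π = π B) ∧
      (∀ π' : Measure (∀ i, AddCircle (τ i)),
        (IsProbabilityMeasure π' ∧
          ∀ t : ℝ, 0 ≤ t → ∀ B : Set (∀ i, AddCircle (τ i)), MeasurableSet B →
            ∫⁻ x, P t x B ∂π' = π' B) → π' = π) ∧
      ∃ Γ : ℝ, 0 < Γ ∧ ∃ γ : ℝ, 0 < γ ∧
        ∀ t : ℝ, 0 ≤ t → ∀ x, ∀ B : Set (∀ i, AddCircle (τ i)), MeasurableSet B →
          |(P t x B).toReal - (π B).toReal| ≤ Γ * Real.exp (-γ * t) := by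
  classical
  -- Chapman–Kolmogorov for sets, in `ℝ≥0∞` form
  have ckSet : ∀ a b : ℝ, 0 ≤ a → 0 ≤ b → ∀ x (B : Set (∀ i, AddCircle (τ i))),
      MeasurableSet B → P (a + b) x B = ∫⁻ y, P b y B ∂(P a x) := by
    intro a b ha hb x B hB
    have hf : Measurable (B.indicator fun _ => (1:ℝ)) := measurable_const.indicator hB
    have hbd : ∃ M, ∀ y, |B.indicator (fun _ => (1:ℝ)) y| ≤ M :=
      ⟨1, fun y => by by_cases hy : y ∈ B <;> simp [Set.indicator_apply, hy]⟩
    have h := hCK b a hb ha _ hf hbd x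
    rw [integral_indicator_const (1:ℝ) hB] at h
    have hin : ∀ y, (∫ z, B.indicator (fun _ => (1:ℝ)) z ∂(P b y)) = (P b y B).toReal := by
      intro y
      rw [integral_indicator_const (1:ℝ) hB]
      simp [Measure.real]
    simp only [hin, smul_eq_mul, mul_one] at h
    rw [integral_toReal (Kernel.measurable_coe _ hB).aemeasurable
      (ae_of_all _ fun y => measure_lt_top _ _)] at h
    have hfin2 : ∫⁻ y, P b y B ∂(P a x) ≠ ⊤ := by
      have h1 : ∫⁻ y, P b y B ∂(P a x) ≤ 1 := by
        calc ∫⁻ y, P b y B ∂(P a x) ≤ ∫⁻ _, 1 ∂(P a x) := lintegral_mono fun y => prob_le_one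
          _ = 1 := by rw [lintegral_const, measure_univ, mul_one]
      exact (h1.trans_lt (by norm_num)).ne
    exact (ENNReal.toReal_eq_toReal_iff' (measure_ne_top _ _) hfin2).mp h
  -- instantiate the master lemma at time 1
  obtain ⟨θ, hθhalf, hθ1, μ, g, hgm, hQQ, hover⟩ :=
    torus_master (P 1) (fun f hf hbd => hSF 1 one_pos f hf hbd)
      (fun x O hO hne => hIrr 1 one_pos x O hO hne)
  have hθ0 : (0:ℝ) < θ := lt_of_lt_of_le (by norm_num) hθhalf
  set Θ : ℝ≥0∞ := ENNReal.ofReal θ with hΘdef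
  -- the two-step transition measure has density `g x`
  have hP2 : ∀ x, P (2:ℝ) x = μ.withDensity (g x) := by
    intro x
    ext B hB
    rw [withDensity_apply _ hB, ← hQQ x B hB]
    have h := ckSet 1 1 zero_le_one zero_le_one x B hB
    norm_num at h
    exact h
  -- oscillation decay
  have hosc : ∀ k : ℕ, ∀ (B : Set (∀ i, AddCircle (τ i))), MeasurableSet B → ∀ x y,
      P (k:ℝ) x B - P (k:ℝ) y B ≤ Θ ^ (k / 2) := by
    intro k
    induction k using Nat.strong_induction_on with
    | _ k ih =>
      match k with
      | 0 =>
        intro B hB x y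
        simpa using le_trans tsub_le_self prob_le_one
      | 1 =>
        intro B hB x y
        simpa using le_trans tsub_le_self prob_le_one
      | (k+2) =>
        intro B hB x y
        have hrw : ∀ z, P ((k+2 : ℕ) : ℝ) z B = ∫⁻ w, P (k:ℝ) w B ∂(P 2 z) := by
          intro z
          have hcast : ((k + 2 : ℕ) : ℝ) = 2 + (k : ℝ) := by push_cast; ring
          rw [hcast]
          exact ckSet 2 k (by norm_num) (Nat.cast_nonneg k) z B hB
        rw [hrw x, hrw y]
        have hdiv : (k + 2) / 2 = k / 2 + 1 := by omega
        rw [hdiv, pow_succ]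
        exact osc_contract μ (P 2 x) (P 2 y) (g x) (g y) (hgm x) (hgm y) (hP2 x) (hP2 y)
          Θ (Θ ^ (k/2)) (hover x y) _ (Kernel.measurable_coe _ hB)
          (fun z => prob_le_one) (fun z w => ih k (by omega) B hB z w)
  -- real-valued decay rates
  set c : ℕ → ℝ := fun n => θ ^ (n / 2) with hcdef
  have hcpos : ∀ n, 0 < c n := fun n => pow_pos hθ0 _
  have hΘc : ∀ n : ℕ, Θ ^ (n / 2) = ENNReal.ofReal (c n) := fun n =>
    (ENNReal.ofReal_pow hθ0.le _).symm
  have hoscR : ∀ (B : Set (∀ i, AddCircle (τ i))), MeasurableSet B → ∀ (n : ℕ) x y,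
      |(P (n:ℝ) x B).toReal - (P (n:ℝ) y B).toReal| ≤ c n := by
    intro B hB n x y
    have key : ∀ u v, P (n:ℝ) u B - P (n:ℝ) v B ≤ ENNReal.ofReal (c n) := by
      intro u v
      rw [← hΘc n]
      exact hosc n B hB u v
    rw [abs_sub_le_iff]
    constructor
    · have h1 : P (n:ℝ) x B ≤ P (n:ℝ) y B + ENNReal.ofReal (c n) :=
        tsub_le_iff_left.mp (key x y)
      have h2 := ENNReal.toReal_mono
        (ENNReal.add_ne_top.mpr ⟨measure_ne_top _ _, ENNReal.ofReal_ne_top⟩) h1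
      rw [ENNReal.toReal_add (measure_ne_top _ _) ENNReal.ofReal_ne_top,
        ENNReal.toReal_ofReal (hcpos n).le] at h2
      linarith
    · have h1 : P (n:ℝ) y B ≤ P (n:ℝ) x B + ENNReal.ofReal (c n) :=
        tsub_le_iff_left.mp (key y x)
      have h2 := ENNReal.toReal_mono
        (ENNReal.add_ne_top.mpr ⟨measure_ne_top _ _, ENNReal.ofReal_ne_top⟩) h1
      rw [ENNReal.toReal_add (measure_ne_top _ _) ENNReal.ofReal_ne_top,
        ENNReal.toReal_ofReal (hcpos n).le] at h2
      linarith
  have hctend : Tendsto c atTop (𝓝 0) := by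
    have hhalf : Tendsto (fun n : ℕ => n / 2) atTop atTop := by
      refine tendsto_atTop_atTop.mpr fun b => ⟨2*b, fun a ha => ?_⟩
      omega
    exact (tendsto_pow_atTop_nhds_zero_of_lt_one hθ0.le hθ1).comp hhalf
  -- the basepoint and limit set function
  set x₀ : (∀ i, AddCircle (τ i)) := Classical.arbitrary _ with hx₀
  set rr : Set (∀ i, AddCircle (τ i)) → ℕ → ℝ := fun B n => (P (n:ℝ) x₀ B).toReal with hrrdef
  -- Cauchy property
  have hrB : ∀ (B : Set (∀ i, AddCircle (τ i))), MeasurableSet B → ∀ n m : ℕ, n ≤ m →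
      |rr B m - rr B n| ≤ c n := by
    intro B hB n m hnm
    obtain ⟨p, rfl⟩ := Nat.exists_eq_add_of_le hnm
    have hcast : ((n + p : ℕ):ℝ) = (p:ℝ) + (n:ℝ) := by push_cast; ring
    have h := ckSet p n (Nat.cast_nonneg p) (Nat.cast_nonneg n) x₀ B hB
    have hint : rr B (n + p) = ∫ y, (P (n:ℝ) y B).toReal ∂(P (p:ℝ) x₀) := by
      rw [hrrdef]
      simp only
      rw [hcast, h, integral_toReal (Kernel.measurable_coe _ hB).aemeasurable
        (ae_of_all _ fun y => measure_lt_top _ _)]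
    rw [hint]
    exact integral_dist_le _ _ (Kernel.measurable_coe _ hB).ennreal_toReal 1
      (fun y => by
        rw [abs_of_nonneg ENNReal.toReal_nonneg]
        exact ENNReal.toReal_le_of_le_ofReal zero_le_one (by simpa using prob_le_one))
      (rr B n) (c n) (fun y => hoscR B hB n y x₀)
  have hcauchy : ∀ (B : Set (∀ i, AddCircle (τ i))), MeasurableSet B → CauchySeq (rr B) := by
    intro B hB
    refine cauchySeq_of_le_tendsto_0 (fun n => 2 * c n) (fun n m N hn hm => ?_) ?_
    · rw [Real.dist_eq]
      have h1 := hrB B hB N n hn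
      have h2 := hrB B hB N m hm
      calc |rr B n - rr B m| ≤ |rr B n - rr B N| + |rr B N - rr B m| := abs_sub_le _ _ _
        _ ≤ c N + c N := by
            rw [abs_sub_comm (rr B N) (rr B m)]
            exact add_le_add h1 h2
        _ = 2 * c N := by ring
    · simpa using hctend.const_mul 2
  set Lr : Set (∀ i, AddCircle (τ i)) → ℝ := fun B => limUnder atTop (rr B) with hLrdef
  have hLtend : ∀ (B : Set (∀ i, AddCircle (τ i))), MeasurableSet B →
      Tendsto (rr B) atTop (𝓝 (Lr B)) := by
    intro B hB
    obtain ⟨l, hl⟩ := cauchySeq_tendsto_of_complete (hcauchy B hB)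
    rw [hLrdef]
    simp only
    rw [hl.limUnder_eq]
    exact hl
  have hL0 : ∀ (B : Set (∀ i, AddCircle (τ i))), MeasurableSet B → 0 ≤ Lr B := by
    intro B hB
    exact ge_of_tendsto (hLtend B hB) (Eventually.of_forall fun n => ENNReal.toReal_nonneg)
  have hL1 : ∀ (B : Set (∀ i, AddCircle (τ i))), MeasurableSet B → Lr B ≤ 1 := by
    intro B hB
    refine le_of_tendsto (hLtend B hB) (Eventually.of_forall fun n => ?_)
    exact ENNReal.toReal_le_of_le_ofReal zero_le_one (by simpa using prob_le_one)
  have hLr_close : ∀ (B : Set (∀ i, AddCircle (τ i))), MeasurableSet B → ∀ n : ℕ,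
      |Lr B - rr B n| ≤ c n := by
    intro B hB n
    have h2 : Tendsto (fun p : ℕ => |rr B (p + n) - rr B n|) atTop (𝓝 |Lr B - rr B n|) := by
      have ha : Tendsto (fun p : ℕ => rr B (p + n)) atTop (𝓝 (Lr B)) :=
        (hLtend B hB).comp (tendsto_add_atTop_nat n)
      exact ((ha.sub_const (rr B n)).abs)
    refine le_of_tendsto h2 (Eventually.of_forall fun p => ?_)
    exact hrB B hB n (p + n) (by omega)
  have hUnif : ∀ (B : Set (∀ i, AddCircle (τ i))), MeasurableSet B → ∀ (n : ℕ) x,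
      |(P (n:ℝ) x B).toReal - Lr B| ≤ 2 * c n := by
    intro B hB n x
    have h1 := hoscR B hB n x x₀
    have h2 := hLr_close B hB n
    calc |(P (n:ℝ) x B).toReal - Lr B|
        ≤ |(P (n:ℝ) x B).toReal - rr B n| + |rr B n - Lr B| := abs_sub_le _ _ _
      _ ≤ c n + c n := add_le_add h1 (by rwa [abs_sub_comm])
      _ = 2 * c n := by ring
  -- construct the invariant measure
  have hLr_empty : Lr ∅ = 0 := by
    have h := hLtend ∅ MeasurableSet.empty
    have h2 : Tendsto (rr ∅) atTop (𝓝 0) := by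
      have : rr ∅ = fun _ => 0 := by
        funext n
        rw [hrrdef]
        simp
      rw [this]
      exact tendsto_const_nhds
    exact tendsto_nhds_unique h h2
  have hmU : ∀ (f : ℕ → Set (∀ i, AddCircle (τ i))), (∀ i, MeasurableSet (f i)) →
      Pairwise (Function.onFun Disjoint f) →
      ENNReal.ofReal (Lr (⋃ i, f i)) = ∑' i, ENNReal.ofReal (Lr (f i)) := by
    intro f hfm hdisj
    set U : ℕ → Set (∀ i, AddCircle (τ i)) := fun N => ⋃ i ∈ Finset.range N, f i with hUdef
    have hUmeas : ∀ N, MeasurableSet (U N) := fun N =>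
      (Finset.range N).measurableSet_biUnion (fun i _ => hfm i)
    set T : ℕ → Set (∀ i, AddCircle (τ i)) := fun N => ⋃ i ∈ {j : ℕ | N ≤ j}, f i with hTdef
    have hTmeas : ∀ N, MeasurableSet (T N) :=
      fun N => MeasurableSet.biUnion (to_countable _) (fun i _ => hfm i)
    have hsplitU : ∀ N, (⋃ i, f i) = U N ∪ T N := by
      intro N
      ext z
      simp only [hUdef, hTdef, mem_iUnion, mem_union, Finset.mem_range, mem_setOf_eq,
        exists_prop]
      constructor
      · rintro ⟨i, hi⟩
        rcases lt_or_ge i N with h | h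
        · exact Or.inl ⟨i, h, hi⟩
        · exact Or.inr ⟨i, h, hi⟩
      · rintro (⟨i, -, hi⟩ | ⟨i, -, hi⟩) <;> exact ⟨i, hi⟩
    have hdisjUT : ∀ N, Disjoint (U N) (T N) := by
      intro N
      rw [Set.disjoint_left]
      rintro z hzU hzT
      simp only [hUdef, hTdef, mem_iUnion, Finset.mem_range, mem_setOf_eq, exists_prop] at hzU hzT
      obtain ⟨i, hi, hzi⟩ := hzU
      obtain ⟨j, hj, hzj⟩ := hzT
      exact Set.disjoint_left.mp (hdisj (show i ≠ j by omega)) hzi hzj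
    have hLrUN : ∀ N, Lr (U N) = ∑ i ∈ Finset.range N, Lr (f i) := by
      intro N
      have hseq : ∀ n : ℕ, rr (U N) n = ∑ i ∈ Finset.range N, rr (f i) n := by
        intro n
        rw [hrrdef]
        simp only
        rw [hUdef]
        simp only
        rw [measure_biUnion_finset (fun i _ j _ hij => hdisj hij) (fun i _ => hfm i),
          ENNReal.toReal_sum (fun i _ => measure_ne_top _ _)]
      have ht1 : Tendsto (rr (U N)) atTop (𝓝 (Lr (U N))) := hLtend (U N) (hUmeas N)
      have ht2 : Tendsto (rr (U N)) atTop (𝓝 (∑ i ∈ Finset.range N, Lr (f i))) := by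
        rw [show rr (U N) = fun n => ∑ i ∈ Finset.range N, rr (f i) n from funext hseq]
        exact tendsto_finset_sum _ (fun i _ => hLtend (f i) (hfm i))
      exact tendsto_nhds_unique ht1 ht2
    have hLrsplit : ∀ N, Lr (⋃ i, f i) = Lr (U N) + Lr (T N) := by
      intro N
      have hseq : ∀ n : ℕ, rr (⋃ i, f i) n = rr (U N) n + rr (T N) n := by
        intro n
        rw [hrrdef]
        simp only
        rw [hsplitU N, measure_union (hdisjUT N) (hTmeas N),
          ENNReal.toReal_add (measure_ne_top _ _) (measure_ne_top _ _)]
      have ht1 : Tendsto (rr (⋃ i, f i)) atTop (𝓝 (Lr (⋃ i, f i))) :=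
        hLtend _ (MeasurableSet.iUnion hfm)
      have ht2 : Tendsto (rr (⋃ i, f i)) atTop (𝓝 (Lr (U N) + Lr (T N))) := by
        rw [show rr (⋃ i, f i) = fun n => rr (U N) n + rr (T N) n from funext hseq]
        exact ((hLtend (U N) (hUmeas N)).add (hLtend (T N) (hTmeas N)))
      exact tendsto_nhds_unique ht1 ht2
    have hTtend : Tendsto (fun N => Lr (T N)) atTop (𝓝 0) := by
      rw [Metric.tendsto_atTop]
      intro ε hε
      obtain ⟨n, hn⟩ := (Metric.tendsto_atTop.mp hctend (ε/2) (by linarith)).imp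
        (fun n h => h n le_rfl)
      rw [Real.dist_eq, sub_zero, abs_of_pos (hcpos n)] at hn
      have hPt : Tendsto (fun N => P (n:ℝ) x₀ (T N)) atTop (𝓝 0) := by
        have hanti : Antitone T := by
          intro N M hNM
          rw [hTdef]
          refine Set.biUnion_subset_biUnion_left ?_
          intro j hj
          simp only [mem_setOf_eq] at hj ⊢
          omega
        have hempty : (⋂ N, T N) = ∅ := by
          ext z
          simp only [mem_iInter, mem_empty_iff_false, iff_false, not_forall]
          by_contra hcon
          push_neg at hcon
          have h0 := hcon 0
          rw [hTdef] at h0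
          simp only [mem_iUnion, mem_setOf_eq, exists_prop] at h0
          obtain ⟨i, -, hzi⟩ := h0
          have h1 := hcon (i + 1)
          rw [hTdef] at h1
          simp only [mem_iUnion, mem_setOf_eq, exists_prop] at h1
          obtain ⟨j, hj, hzj⟩ := h1
          exact Set.disjoint_left.mp (hdisj (show i ≠ j by omega)) hzi hzj
        have := tendsto_measure_iInter_atTop (μ := P (n:ℝ) x₀)
          (fun N => (hTmeas N).nullMeasurableSet) hanti ⟨0, measure_ne_top _ _⟩
        rw [hempty] at this
        simpa [Function.comp_def] using this
      have hPtR : Tendsto (fun N => (P (n:ℝ) x₀ (T N)).toReal) atTop (𝓝 0) := by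
        have h := (ENNReal.tendsto_toReal (by simp : (0:ℝ≥0∞) ≠ ⊤)).comp hPt
        simpa [Function.comp_def] using h
      obtain ⟨N₀, hN₀⟩ := Metric.tendsto_atTop.mp hPtR (ε/2 - c n + ε/2) (by linarith)
      refine ⟨N₀, fun N hN => ?_⟩
      have hb := hN₀ N hN
      rw [Real.dist_eq, sub_zero, abs_of_nonneg ENNReal.toReal_nonneg] at hb
      have hc := hLr_close (T N) (hTmeas N) n
      rw [Real.dist_eq, sub_zero, abs_of_nonneg (hL0 (T N) (hTmeas N))]
      have : |Lr (T N) - rr (T N) n| ≤ c n := hc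
      rw [abs_le] at this
      have : Lr (T N) ≤ rr (T N) n + c n := by linarith [this.2]
      rw [hrrdef] at this
      simp only at this
      linarith
    -- assemble countable additivity
    rw [ENNReal.tsum_eq_iSup_sum' (fun N => Finset.range N) (fun t => by
      refine ⟨(t.sup id) + 1, fun i hi => Finset.mem_range.mpr ?_⟩
      exact Nat.lt_succ_of_le (Finset.le_sup (f := id) hi))]
    have hsum : ∀ N, ∑ i ∈ Finset.range N, ENNReal.ofReal (Lr (f i))
        = ENNReal.ofReal (Lr (U N)) := by
      intro N
      rw [hLrUN N, ENNReal.ofReal_sum_of_nonneg (fun i _ => hL0 _ (hfm i))]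
    rw [show (fun N => ∑ i ∈ Finset.range N, ENNReal.ofReal (Lr (f i)))
      = fun N => ENNReal.ofReal (Lr (U N)) from funext hsum]
    refine le_antisymm ?_ ?_
    · -- ofReal (Lr ⋃) ≤ ⨆
      have hULtend : Tendsto (fun N => Lr (U N)) atTop (𝓝 (Lr (⋃ i, f i))) := by
        have h1 : ∀ N, Lr (U N) = Lr (⋃ i, f i) - Lr (T N) := fun N => by
          rw [hLrsplit N]; ring
        rw [show (fun N => Lr (U N)) = fun N => Lr (⋃ i, f i) - Lr (T N) from funext h1]
        have := (tendsto_const_nhds (x := Lr (⋃ i, f i)) (f := atTop (α := ℕ))).sub hTtend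
        simpa using this
      have hUL2 : Tendsto (fun N => ENNReal.ofReal (Lr (U N))) atTop
          (𝓝 (ENNReal.ofReal (Lr (⋃ i, f i)))) :=
        (ENNReal.continuous_ofReal.tendsto _).comp hULtend
      exact le_of_tendsto hUL2 (Eventually.of_forall fun N => le_iSup (fun N => ENNReal.ofReal (Lr (U N))) N)
    · refine iSup_le fun N => ENNReal.ofReal_le_ofReal ?_
      have h1 := hLrsplit N
      have h2 := hL0 (T N) (hTmeas N)
      linarith
  set π : Measure (∀ i, AddCircle (τ i)) :=
    Measure.ofMeasurable (fun s _ => ENNReal.ofReal (Lr s))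
      (by show ENNReal.ofReal (Lr ∅) = 0; rw [hLr_empty]; simp)
      (fun f hfm hdisj => hmU f hfm hdisj) with hπdef
  have hπapp : ∀ (B : Set (∀ i, AddCircle (τ i))), MeasurableSet B →
      π B = ENNReal.ofReal (Lr B) := by
    intro B hB
    rw [hπdef]
    exact Measure.ofMeasurable_apply B hB
  have hLruniv : Lr univ = 1 := by
    have h := hLtend univ MeasurableSet.univ
    have h2 : Tendsto (rr univ) atTop (𝓝 1) := by
      have : rr univ = fun _ => 1 := by
        funext n
        rw [hrrdef]
        simp
      rw [this]
      exact tendsto_const_nhds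
    exact tendsto_nhds_unique h h2
  have hπprob : IsProbabilityMeasure π := by
    constructor
    rw [hπapp univ MeasurableSet.univ, hLruniv]
    simp
  -- invariance
  have hinv : ∀ t : ℝ, 0 ≤ t → ∀ B : Set (∀ i, AddCircle (τ i)), MeasurableSet B →
      ∫⁻ x, P t x B ∂π = π B := by
    intro t ht B hB
    set G : (∀ i, AddCircle (τ i)) → ℝ≥0∞ := fun x => P t x B with hGdef
    have hGm : Measurable G := Kernel.measurable_coe _ hB
    have hG1 : ∀ z, G z ≤ 1 := fun z => prob_le_one
    set V : ℝ≥0∞ := ∫⁻ x, G x ∂π with hVdef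
    have hVne : V ≠ ⊤ := by
      have h1 : V ≤ 1 := by
        calc V ≤ ∫⁻ _, 1 ∂π := lintegral_mono hG1
          _ = 1 := by rw [lintegral_const, measure_univ, mul_one]
      exact (h1.trans_lt (by norm_num)).ne
    have hdn : ∀ n : ℕ, ∀ A : Set (∀ i, AddCircle (τ i)), MeasurableSet A →
        π A ≤ P (n:ℝ) x₀ A + ENNReal.ofReal (2 * c n)
        ∧ P (n:ℝ) x₀ A ≤ π A + ENNReal.ofReal (2 * c n) := by
      intro n A hA
      have h := hUnif A hA n x₀
      rw [abs_le] at h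
      rw [hπapp A hA]
      constructor
      · calc ENNReal.ofReal (Lr A) ≤ ENNReal.ofReal ((P (n:ℝ) x₀ A).toReal + 2 * c n) :=
              ENNReal.ofReal_le_ofReal (by linarith [h.1])
          _ ≤ ENNReal.ofReal ((P (n:ℝ) x₀ A).toReal) + ENNReal.ofReal (2 * c n) :=
              ENNReal.ofReal_add_le
          _ = P (n:ℝ) x₀ A + ENNReal.ofReal (2 * c n) := by
              rw [ENNReal.ofReal_toReal (measure_ne_top _ _)]
      · calc P (n:ℝ) x₀ A = ENNReal.ofReal ((P (n:ℝ) x₀ A).toReal) := by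
              rw [ENNReal.ofReal_toReal (measure_ne_top _ _)]
          _ ≤ ENNReal.ofReal (Lr A + 2 * c n) := ENNReal.ofReal_le_ofReal (by linarith [h.2])
          _ ≤ ENNReal.ofReal (Lr A) + ENNReal.ofReal (2 * c n) := ENNReal.ofReal_add_le
    have hGint : ∀ n : ℕ, ∫⁻ x, G x ∂(P (n:ℝ) x₀) = P ((n:ℝ) + t) x₀ B :=
      fun n => (ckSet n t (Nat.cast_nonneg n) ht x₀ B hB).symm
    have hclose : ∀ n : ℕ, |(P ((n:ℝ) + t) x₀ B).toReal - Lr B| ≤ 2 * c n := by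
      intro n
      have hck2 : P ((n:ℝ) + t) x₀ B = ∫⁻ y, P (n:ℝ) y B ∂(P t x₀) := by
        rw [add_comm]
        exact ckSet t n ht (Nat.cast_nonneg n) x₀ B hB
      have htr : (P ((n:ℝ) + t) x₀ B).toReal = ∫ y, (P (n:ℝ) y B).toReal ∂(P t x₀) := by
        rw [hck2, integral_toReal (Kernel.measurable_coe _ hB).aemeasurable
          (ae_of_all _ fun y => measure_lt_top _ _)]
      rw [htr]
      exact integral_dist_le _ _ (Kernel.measurable_coe _ hB).ennreal_toReal 1
        (fun y => by
          rw [abs_of_nonneg ENNReal.toReal_nonneg]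
          exact ENNReal.toReal_le_of_le_ofReal zero_le_one (by simpa using prob_le_one))
        (Lr B) (2 * c n) (fun y => hUnif B hB n y)
    have hVreal : ∀ n : ℕ, |V.toReal - Lr B| ≤ 4 * c n := by
      intro n
      have hfin : P ((n:ℝ) + t) x₀ B ≠ ⊤ := measure_ne_top _ _
      have h1 : V ≤ P ((n:ℝ) + t) x₀ B + ENNReal.ofReal (2 * c n) := by
        rw [← hGint n]
        exact lintegral_le_of_tv π (P (n:ℝ) x₀) _ (fun A hA => (hdn n A hA).1) G hGm hG1
      have h2 : P ((n:ℝ) + t) x₀ B ≤ V + ENNReal.ofReal (2 * c n) := by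
        conv_lhs => rw [← hGint n]
        exact lintegral_le_of_tv (P (n:ℝ) x₀) π _ (fun A hA => (hdn n A hA).2) G hGm hG1
      have h1R := ENNReal.toReal_mono
        (ENNReal.add_ne_top.mpr ⟨hfin, ENNReal.ofReal_ne_top⟩) h1
      rw [ENNReal.toReal_add hfin ENNReal.ofReal_ne_top,
        ENNReal.toReal_ofReal (by positivity)] at h1R
      have h2R := ENNReal.toReal_mono
        (ENNReal.add_ne_top.mpr ⟨hVne, ENNReal.ofReal_ne_top⟩) h2
      rw [ENNReal.toReal_add hVne ENNReal.ofReal_ne_top,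
        ENNReal.toReal_ofReal (by positivity)] at h2R
      have h3 := hclose n
      rw [abs_le] at h3 ⊢
      constructor <;> [linarith [h3.1]; linarith [h3.2]]
    have hVeq : V.toReal = Lr B := by
      have h0 : |V.toReal - Lr B| ≤ 0 := by
        have h4 : Tendsto (fun n : ℕ => 4 * c n) atTop (𝓝 0) := by
          simpa using hctend.const_mul 4
        exact ge_of_tendsto h4 (Eventually.of_forall fun n => hVreal n)
      have := abs_nonneg (V.toReal - Lr B)
      have habs : |V.toReal - Lr B| = 0 := le_antisymm h0 this
      rw [abs_eq_zero] at habs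
      linarith
    rw [hπapp B hB, ← hVeq, ENNReal.ofReal_toReal hVne]
  refine ⟨π, ⟨hπprob, hinv⟩, ?_, ?_⟩
  · -- uniqueness
    rintro π' ⟨hπ'prob, hπ'inv⟩
    ext B hB
    have hbound : ∀ n : ℕ, |(π' B).toReal - Lr B| ≤ 2 * c n := by
      intro n
      have h := hπ'inv (n:ℝ) (Nat.cast_nonneg n) B hB
      have htr : (π' B).toReal = ∫ x, (P (n:ℝ) x B).toReal ∂π' := by
        rw [← h, integral_toReal (Kernel.measurable_coe _ hB).aemeasurable
          (ae_of_all _ fun y => measure_lt_top _ _)]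
      rw [htr]
      exact integral_dist_le _ _ (Kernel.measurable_coe _ hB).ennreal_toReal 1
        (fun y => by
          rw [abs_of_nonneg ENNReal.toReal_nonneg]
          exact ENNReal.toReal_le_of_le_ofReal zero_le_one (by simpa using prob_le_one))
        (Lr B) (2 * c n) (fun y => hUnif B hB n y)
    have heq : (π' B).toReal = Lr B := by
      have h0 : |(π' B).toReal - Lr B| ≤ 0 := by
        have h4 : Tendsto (fun n : ℕ => 2 * c n) atTop (𝓝 0) := by
          simpa using hctend.const_mul 2
        exact ge_of_tendsto h4 (Eventually.of_forall fun n => hbound n)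
      have := abs_nonneg ((π' B).toReal - Lr B)
      have habs : |(π' B).toReal - Lr B| = 0 := le_antisymm h0 this
      rw [abs_eq_zero] at habs
      linarith
    rw [hπapp B hB, ← heq, ENNReal.ofReal_toReal (measure_ne_top π' B)]
  · -- exponential convergence
    set γ : ℝ := -Real.log θ / 2 with hγdef
    have hlogneg : Real.log θ < 0 := Real.log_neg hθ0 hθ1
    have hγpos : 0 < γ := by
      rw [hγdef]
      linarith
    refine ⟨2 * Real.exp (2 * γ), by positivity, γ, hγpos, ?_⟩
    intro t ht x B hB
    have hπB : (π B).toReal = Lr B := by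
      rw [hπapp B hB, ENNReal.toReal_ofReal (hL0 B hB)]
    set n : ℕ := ⌊t⌋₊ with hn
    have hnt : (n:ℝ) ≤ t := Nat.floor_le ht
    have htn : t < n + 1 := Nat.lt_floor_add_one t
    have hclose : |(P t x B).toReal - Lr B| ≤ 2 * c n := by
      have h := ckSet (t - n) n (by linarith) (Nat.cast_nonneg n) x B hB
      rw [show (t - (n:ℝ)) + (n:ℝ) = t by ring] at h
      have htr : (P t x B).toReal = ∫ y, (P (n:ℝ) y B).toReal ∂(P (t - n) x) := by
        rw [h, integral_toReal (Kernel.measurable_coe _ hB).aemeasurable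
          (ae_of_all _ fun y => measure_lt_top _ _)]
      rw [htr]
      exact integral_dist_le _ _ (Kernel.measurable_coe _ hB).ennreal_toReal 1
        (fun y => by
          rw [abs_of_nonneg ENNReal.toReal_nonneg]
          exact ENNReal.toReal_le_of_le_ofReal zero_le_one (by simpa using prob_le_one))
        (Lr B) (2 * c n) (fun y => hUnif B hB n y)
    have hcbound : c n ≤ Real.exp (2 * γ) * Real.exp (-γ * t) := by
      have hfloor : ((n:ℝ) - 1) / 2 ≤ ((n / 2 : ℕ) : ℝ) := by
        have h2 : n ≤ 2 * (n / 2) + 1 := by omega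
        have h3 : (n:ℝ) ≤ 2 * ((n / 2 : ℕ):ℝ) + 1 := by exact_mod_cast h2
        linarith
      have hexp : (t - 2) / 2 ≤ ((n / 2 : ℕ) : ℝ) := by
        have : t - 1 ≤ (n:ℝ) := by linarith
        linarith [hfloor]
      calc c n = θ ^ (((n / 2 : ℕ) : ℝ)) := by
            rw [hcdef]
            simp only
            rw [← Real.rpow_natCast]
        _ ≤ θ ^ ((t - 2) / 2) := Real.rpow_le_rpow_of_exponent_ge hθ0 hθ1.le hexp
        _ = Real.exp (Real.log θ * ((t - 2) / 2)) := Real.rpow_def_of_pos hθ0 _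
        _ = Real.exp (2 * γ) * Real.exp (-γ * t) := by
            rw [← Real.exp_add]
            congr 1
            rw [hγdef]
            ring
    calc |(P t x B).toReal - (π B).toReal| = |(P t x B).toReal - Lr B| := by rw [hπB]
      _ ≤ 2 * c n := hclose
      _ ≤ 2 * (Real.exp (2 * γ) * Real.exp (-γ * t)) := by linarith [hcbound]
      _ = 2 * Real.exp (2 * γ) * Real.exp (-γ * t) := by ring
end

section
/- Let (P_t)_{t≥0} be a Markov semigroup on a measurable space E and let π be an invariant probability measure for it, i.e. ∫_E P_t f dπ = ∫_E f dπ for all t ≥ 0 and all bounded measurable f. Suppose there exist constants Γ > 0 and γ > 0 such that |P_t h(x) − ∫_E h dπ| ≤ Γ e^{−γ t} ‖h‖_∞ for every bounded measurable h : E → ℝ, every x ∈ E and every t ≥ 0. Let g : E → ℝ be bounded measurable with ∫_E g dπ = 0, and assume the map (t, x) ↦ P_t g(x) is jointly measurable on [0,∞) × E. Then: (a) for every x ∈ E the integral β(x) := −∫₀^∞ P_s g(x) ds converges absolutely, and ‖β‖_∞ ≤ (Γ/γ) ‖g‖_∞; (b) ∫_E β dπ = 0; (c) β solves the Poisson equation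 for g in mild form: P_t β(x) − β(x) = ∫₀^t P_s g(x) ds for every t ≥ 0 and every x ∈ E; (d) β is the unique bounded measurable function with ∫_E β dπ = 0 satisfying the identities in (c) for all t ≥ 0 and x ∈ E. -/
open MeasureTheory ProbabilityTheory Set

/-- Existence, bound, centering, mild Poisson equation and uniqueness for the
zero-resolvent solution of the Poisson equation associated with an exponentially ergodic
Markov semigroup. -/
theorem poisson_equation_for_exponentially_ergodic_semigroup
    {E : Type*} [MeasurableSpace E]
    (P : ℝ → Kernel E E) [∀ t, IsMarkovKernel (P t)]
    (hP0 : ∀ x : E, P 0 x = Measure.dirac x)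
    (hCK : ∀ s t : ℝ, 0 ≤ s → 0 ≤ t → ∀ f : E → ℝ, Measurable f → (∃ M, ∀ y, |f y| ≤ M) →
      ∀ x : E, ∫ y, f y ∂(P (t + s) x) = ∫ y, (∫ z, f z ∂(P s y)) ∂(P t x))
    (π : Measure E) [IsProbabilityMeasure π]
    (hinv : ∀ t : ℝ, 0 ≤ t → ∀ f : E → ℝ, Measurable f → (∃ M, ∀ y, |f y| ≤ M) →
      ∫ x, (∫ y, f y ∂(P t x)) ∂π = ∫ x, f x ∂π)
    (Γ γ : ℝ) (hΓ : 0 < Γ) (hγ : 0 < γ)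
    (herg : ∀ h : E → ℝ, Measurable h → ∀ M : ℝ, (∀ y, |h y| ≤ M) →
      ∀ x : E, ∀ t : ℝ, 0 ≤ t →
        |(∫ y, h y ∂(P t x)) - ∫ y, h y ∂π| ≤ Γ * Real.exp (-γ * t) * M)
    (g : E → ℝ) (hgm : Measurable g) (hgb : ∃ M, ∀ y, |g y| ≤ M)
    (hgπ : ∫ y, g y ∂π = 0)
    (hjm : Measurable fun p : ℝ × E => ∫ y, g y ∂(P p.1 p.2))
    (β : E → ℝ)
    (hβ : β = fun x => - ∫ s in Ici (0:ℝ), (∫ y, g y ∂(P s x))) :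
    -- (a) absolute convergence of the defining integral and the sup-norm bound
    (∀ x : E, IntegrableOn (fun s : ℝ => ∫ y, g y ∂(P s x)) (Ici (0:ℝ))) ∧
    (∀ M : ℝ, (∀ y, |g y| ≤ M) → ∀ x : E, |β x| ≤ (Γ / γ) * M) ∧
    -- (b) centering
    (∫ x, β x ∂π = 0) ∧
    -- (c) mild form of the Poisson equation
    (∀ t : ℝ, 0 ≤ t → ∀ x : E,
      (∫ y, β y ∂(P t x)) - β x = ∫ s in (0:ℝ)..t, (∫ y, g y ∂(P s x))) ∧
    -- (d) uniqueness
    (∀ β' : E → ℝ, Measurable β' → (∃ M, ∀ y, |β' y| ≤ M) → (∫ x, β' x ∂π = 0) →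
      (∀ t : ℝ, 0 ≤ t → ∀ x : E,
        (∫ y, β' y ∂(P t x)) - β' x = ∫ s in (0:ℝ)..t, (∫ y, g y ∂(P s x))) →
      β' = β) := by
  obtain ⟨M₀, hM₀⟩ := hgb
  -- exponential decay of `s ↦ ∫ g ∂(P s x)`
  have hdecay : ∀ M : ℝ, (∀ y, |g y| ≤ M) → ∀ (x : E) (s : ℝ), 0 ≤ s →
      |∫ y, g y ∂(P s x)| ≤ Γ * Real.exp (-γ * s) * M := by
    intro M hM x s hs
    have := herg g hgm M hM x s hs
    rwa [hgπ, sub_zero] at this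
  -- measurability in `s` for fixed `x`
  have humx : ∀ x : E, Measurable fun s : ℝ => ∫ y, g y ∂(P s x) := fun x =>
    hjm.comp (measurable_id.prodMk measurable_const)
  -- integrability of the exponential bound
  have hexpI : ∀ M : ℝ, IntegrableOn (fun s : ℝ => Γ * Real.exp (-γ * s) * M) (Ici (0:ℝ)) := by
    intro M
    rw [integrableOn_Ici_iff_integrableOn_Ioi]
    exact ((exp_neg_integrableOn_Ioi 0 hγ).const_mul Γ).mul_const M
  -- value of the exponential integral
  have hIexp : ∫ s in Ici (0:ℝ), Real.exp (-γ * s) = γ⁻¹ := by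
    rw [integral_Ici_eq_integral_Ioi]
    have h := integral_comp_mul_left_Ioi (fun x : ℝ => Real.exp (-x)) 0 hγ
    simp only [mul_zero] at h
    rw [integral_exp_neg_Ioi] at h
    simp only [neg_mul]
    rw [h]
    simp
  have hIval : ∀ M : ℝ, ∫ s in Ici (0:ℝ), Γ * Real.exp (-γ * s) * M = Γ / γ * M := by
    intro M
    rw [MeasureTheory.integral_mul_const, MeasureTheory.integral_const_mul, hIexp,
      div_eq_mul_inv]
  -- (a1)
  have hInt : ∀ x : E, IntegrableOn (fun s : ℝ => ∫ y, g y ∂(P s x)) (Ici (0:ℝ)) := by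
    intro x
    refine (hexpI M₀).mono' ((humx x).aestronglyMeasurable) ?_
    filter_upwards [ae_restrict_mem measurableSet_Ici] with s hs
    rw [Real.norm_eq_abs]
    exact hdecay M₀ hM₀ x s hs
  -- (a2)
  have ha2 : ∀ M : ℝ, (∀ y, |g y| ≤ M) → ∀ x : E, |β x| ≤ Γ / γ * M := by
    intro M hM x
    rw [hβ]
    simp only [abs_neg]
    rw [← Real.norm_eq_abs, ← hIval M]
    refine norm_integral_le_of_norm_le (hexpI M) ?_
    filter_upwards [ae_restrict_mem measurableSet_Ici] with s hs
    rw [Real.norm_eq_abs]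
    exact hdecay M hM x s hs
  -- Fubini swap, for any probability measure on `E`
  have hswap : ∀ (μ : Measure E), IsProbabilityMeasure μ →
      ∫ x, (∫ s in Ici (0:ℝ), ∫ y, g y ∂(P s x)) ∂μ
        = ∫ s in Ici (0:ℝ), (∫ x, (∫ y, g y ∂(P s x)) ∂μ) := by
    intro μ hμ
    refine MeasureTheory.integral_integral_swap ?_
    have hmeas : AEStronglyMeasurable
        (Function.uncurry fun (x : E) (s : ℝ) => ∫ y, g y ∂(P s x))
        (μ.prod (volume.restrict (Ici (0:ℝ)))) :=
      (hjm.comp measurable_swap).aestronglyMeasurable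
    have hae : ∀ᵐ z : E × ℝ ∂(μ.prod (volume.restrict (Ici (0:ℝ)))), z.2 ∈ Ici (0:ℝ) := by
      rw [ae_iff]
      have hset : {z : E × ℝ | ¬ z.2 ∈ Ici (0:ℝ)} = (univ : Set E) ×ˢ (Ici (0:ℝ))ᶜ := by
        ext z; simp
      rw [hset, Measure.prod_prod, Measure.restrict_apply measurableSet_Ici.compl,
        compl_eq_univ_diff]
      simp
    refine Integrable.mono'
      ((integrable_const Γ).mul_prod ((by
        rw [← IntegrableOn, integrableOn_Ici_iff_integrableOn_Ioi]
        exact (exp_neg_integrableOn_Ioi 0 hγ).mul_const M₀ :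
          Integrable (fun s : ℝ => Real.exp (-γ * s) * M₀) (volume.restrict (Ici (0:ℝ))))))
      hmeas ?_
    filter_upwards [hae] with z hz
    rw [Real.norm_eq_abs]
    calc |∫ y, g y ∂(P z.2 z.1)| ≤ Γ * Real.exp (-γ * z.2) * M₀ := hdecay M₀ hM₀ z.1 z.2 hz
    _ = Γ * (Real.exp (-γ * z.2) * M₀) := mul_assoc _ _ _
  -- (b)
  have hb : ∫ x, β x ∂π = 0 := by
    rw [hβ]
    rw [MeasureTheory.integral_neg, hswap π inferInstance, neg_eq_zero]
    rw [setIntegral_congr_fun measurableSet_Ici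
      (fun s hs => by rw [hinv s hs g hgm ⟨M₀, hM₀⟩, hgπ] : EqOn _ (fun _ : ℝ => (0:ℝ)) _)]
    simp
  -- (c)
  have hc : ∀ t : ℝ, 0 ≤ t → ∀ x : E,
      (∫ y, β y ∂(P t x)) - β x = ∫ s in (0:ℝ)..t, (∫ y, g y ∂(P s x)) := by
    intro t ht x
    have h1 : ∫ y, β y ∂(P t x) = - ∫ s in Ici (0:ℝ), (∫ y, g y ∂(P (t + s) x)) := by
      rw [hβ, MeasureTheory.integral_neg, hswap (P t x) inferInstance, neg_inj]
      refine setIntegral_congr_fun measurableSet_Ici (fun s hs => ?_)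
      exact (hCK s t hs ht g hgm ⟨M₀, hM₀⟩ x).symm
    have h2 : ∫ s in Ici (0:ℝ), (∫ y, g y ∂(P (t + s) x))
        = ∫ s in Ici t, (∫ y, g y ∂(P s x)) := by
      have h := (measurePreserving_add_left volume t).setIntegral_preimage_emb
        (measurableEmbedding_addLeft t) (fun s : ℝ => ∫ y, g y ∂(P s x)) (Ici t)
      rw [preimage_const_add_Ici, sub_self] at h
      exact h
    have h3 : ∫ s in Ici (0:ℝ), (∫ y, g y ∂(P s x))
        = (∫ s in Ioc (0:ℝ) t, (∫ y, g y ∂(P s x))) + ∫ s in Ioi t, (∫ y, g y ∂(P s x)) := by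
      rw [integral_Ici_eq_integral_Ioi, ← setIntegral_union Ioc_disjoint_Ioi_same
        measurableSet_Ioi
        (((hInt x).mono_set (fun s hs => le_of_lt hs.1 : Ioc (0:ℝ) t ⊆ Ici 0)))
        (((hInt x).mono_set (fun s hs => ht.trans (le_of_lt hs) : Ioi t ⊆ Ici 0))),
        Ioc_union_Ioi_eq_Ioi ht]
    have h4 : ∫ s in Ici t, (∫ y, g y ∂(P s x)) = ∫ s in Ioi t, (∫ y, g y ∂(P s x)) :=
      integral_Ici_eq_integral_Ioi
    have h5 : β x = - ∫ s in Ici (0:ℝ), (∫ y, g y ∂(P s x)) := by rw [hβ]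
    rw [h1, h2, h4, h5, intervalIntegral.integral_of_le ht]
    linarith [h3]
  -- measurability of β
  have hβm : Measurable β := by
    rw [hβ]
    have hsm : StronglyMeasurable (fun p : E × ℝ => ∫ y, g y ∂(P p.2 p.1)) :=
      (hjm.comp measurable_swap).stronglyMeasurable
    exact (hsm.integral_prod_right').measurable.neg
  -- integrability of bounded measurable functions w.r.t. probability measures
  have hbint : ∀ (μ : Measure E), IsProbabilityMeasure μ → ∀ f : E → ℝ, Measurable f →
      ∀ M : ℝ, (∀ y, |f y| ≤ M) → Integrable f μ := by
    intro μ hμ f hf M hM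
    refine (integrable_const M).mono' hf.aestronglyMeasurable ?_
    exact ae_of_all _ fun y => by rw [Real.norm_eq_abs]; exact hM y
  refine ⟨hInt, ha2, hb, hc, ?_⟩
  -- (d)
  intro β' hβ'm hβ'b hβ'π hps
  obtain ⟨M', hM'⟩ := hβ'b
  set Mδ : ℝ := M' + Γ / γ * M₀ with hMδ
  have hδb : ∀ y, |β' y - β y| ≤ Mδ := fun y =>
    (abs_sub _ _).trans (add_le_add (hM' y) (ha2 M₀ hM₀ y))
  have hδm : Measurable fun y => β' y - β y := hβ'm.sub hβm
  have hβb : ∀ y, |β y| ≤ Γ / γ * M₀ := ha2 M₀ hM₀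
  have hδπ : ∫ y, (β' y - β y) ∂π = 0 := by
    rw [MeasureTheory.integral_sub (hbint π inferInstance β' hβ'm M' hM')
      (hbint π inferInstance β hβm _ hβb), hβ'π, hb, sub_zero]
  funext x
  have hub : ∀ t : ℝ, 0 ≤ t → |β' x - β x| ≤ Γ * Real.exp (-γ * t) * Mδ := by
    intro t ht
    have herg' := herg (fun y => β' y - β y) hδm Mδ hδb x t ht
    rw [hδπ, sub_zero] at herg'
    have hfix : ∫ y, (β' y - β y) ∂(P t x) = β' x - β x := by
      rw [MeasureTheory.integral_sub (hbint (P t x) inferInstance β' hβ'm M' hM')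
        (hbint (P t x) inferInstance β hβm _ hβb)]
      have e1 := hps t ht x
      have e2 := hc t ht x
      linarith
    rwa [hfix] at herg'
  have hlim : Filter.Tendsto (fun t : ℝ => Γ * Real.exp (-γ * t) * Mδ)
      Filter.atTop (nhds 0) := by
    have h1 : Filter.Tendsto (fun t : ℝ => Real.exp (-γ * t)) Filter.atTop (nhds 0) :=
      Real.tendsto_exp_atBot.comp
        (Filter.tendsto_id.const_mul_atTop_of_neg (neg_neg_iff_pos.2 hγ))
    have := (h1.const_mul Γ).mul_const Mδ
    simpa using this
  have hle : |β' x - β x| ≤ 0 :=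
    ge_of_tendsto hlim (Filter.eventually_atTop.2 ⟨0, fun t ht => hub t ht⟩)
  have : β' x - β x = 0 := abs_eq_zero.mp (le_antisymm hle (abs_nonneg _))
  linarith
end

section
/- Fix τ ∈ (0,∞)^d and let 𝒞 denote the set of bounded continuous τ-periodic functions f : ℝ^d → ℝ. Let ψ : (0,1] → (0,∞) satisfy lim_{r→0+} ψ(r) = 0, and for bounded g : ℝ^d → ℝ set [g]_{0,ψ} := sup_{x∈ℝ^d} sup_{0<|h|≤1} |g(x+h) − g(x)| / ψ(|h|) and ‖g‖_ψ := ‖g‖_∞ + [g]_{0,ψ}. Let (P_t)_{t≥0} be a Markov semigroup on ℝ^d such that P_t(𝒞) ⊆ 𝒞 for every t ≥ 0, and let π be a probability measure on ℝ^d with ∫ P_t f dπ = ∫ f dπ for all t ≥ 0 and f ∈ 𝒞. Assume: (i) there exist t₀ > 0 and a measurable C : (0,t₀] → (0,∞) with ∫₀^{t₀} C(t) dt < ∞ such that ‖P_t f‖_ψ ≤ C(t) ‖f‖_∞ for all t ∈ (0,t₀] and all f ∈ 𝒞; (ii) there exist Γ, γ > 0 such that ‖P_t f‖_∞ ≤ Γ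 e^{−γ t} ‖f‖_∞ for every t ≥ 0 and every f ∈ 𝒞 with ∫ f dπ = 0. Then for every f ∈ 𝒞 with ∫ f dπ = 0 such that t ↦ P_t f(x) is measurable for each x, the function R f(x) := ∫₀^∞ P_t f(x) dt is well defined (the integral converges absolutely), and satisfies ‖R f‖_∞ ≤ (Γ/γ)‖f‖_∞ and [R f]_{0,ψ} ≤ (∫₀^{t₀} C(t) dt + Γ C(t₀)/γ) ‖f‖_∞; in particular R f is bounded and uniformly continuous with finite generalized Hölder norm ‖R f‖_ψ. -/
open MeasureTheory ProbabilityTheory Set Filter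
open scoped ENNReal

/-- The set of bounded continuous `τ`-periodic functions on `ℝ^d`. -/
def PeriodicClass (d : ℕ) (τ : Fin d → ℝ) : Set (EuclideanSpace ℝ (Fin d) → ℝ) :=
  {f | Continuous f ∧ (∃ M, ∀ x, |f x| ≤ M) ∧
    ∀ (x : EuclideanSpace ℝ (Fin d)) (k : Fin d → ℤ),
      f (x + (EuclideanSpace.equiv (Fin d) ℝ).symm fun i => τ i * (k i : ℝ)) = f x}

/-- The supremum norm of `g : ℝ^d → ℝ`, valued in `ℝ≥0∞`. -/
noncomputable def supNorm {d : ℕ} (g : EuclideanSpace ℝ (Fin d) → ℝ) : ℝ≥0∞ :=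
  ⨆ x : EuclideanSpace ℝ (Fin d), ENNReal.ofReal |g x|

/-- The generalized Hölder seminorm `[g]_{0,ψ} = sup_x sup_{0<|h|≤1} |g(x+h)−g(x)|/ψ(|h|)`,
valued in `ℝ≥0∞`. -/
noncomputable def holderSeminorm {d : ℕ} (ψ : ℝ → ℝ)
    (g : EuclideanSpace ℝ (Fin d) → ℝ) : ℝ≥0∞ :=
  ⨆ x : EuclideanSpace ℝ (Fin d), ⨆ h : EuclideanSpace ℝ (Fin d),
    ⨆ _ : 0 < ‖h‖ ∧ ‖h‖ ≤ 1, ENNReal.ofReal (|g (x + h) - g x| / ψ ‖h‖)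

/-- Generalized Hölder regularity of the zero-resolvent: under the
regularizing estimate (i) and the exponential decay (ii) on centered bounded continuous
`τ`-periodic functions, for any such `f` the potential `R f = ∫₀^∞ P_t f dt` is well
defined, with `‖Rf‖_∞ ≤ (Γ/γ)‖f‖_∞`,
`[Rf]_{0,ψ} ≤ (∫₀^{t₀} C(t) dt + Γ C(t₀)/γ)‖f‖_∞`, and `R f` is uniformly continuous. -/
theorem holder_regularity_of_resolvent
    (d : ℕ) (τ : Fin d → ℝ) (hτ : ∀ i, 0 < τ i)
    (P : ℝ → Kernel (EuclideanSpace ℝ (Fin d)) (EuclideanSpace ℝ (Fin d)))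
    [∀ t, IsMarkovKernel (P t)]
    (hP0 : ∀ x, P 0 x = Measure.dirac x)
    (hCK : ∀ s t : ℝ, 0 ≤ s → 0 ≤ t → ∀ f : EuclideanSpace ℝ (Fin d) → ℝ,
      Measurable f → (∃ M, ∀ y, |f y| ≤ M) →
      ∀ x, ∫ y, f y ∂(P (t + s) x) = ∫ y, (∫ z, f z ∂(P s y)) ∂(P t x))
    -- `P_t` preserves the class of bounded continuous `τ`-periodic functions
    (hPC : ∀ t : ℝ, 0 ≤ t → ∀ f ∈ PeriodicClass d τ,
      (fun x => ∫ y, f y ∂(P t x)) ∈ PeriodicClass d τ)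
    (π : Measure (EuclideanSpace ℝ (Fin d))) [IsProbabilityMeasure π]
    (hπinv : ∀ t : ℝ, 0 ≤ t → ∀ f ∈ PeriodicClass d τ,
      ∫ x, (∫ y, f y ∂(P t x)) ∂π = ∫ x, f x ∂π)
    (ψ : ℝ → ℝ) (hψpos : ∀ r ∈ Ioc (0:ℝ) 1, 0 < ψ r)
    (hψ0 : Tendsto ψ (nhdsWithin 0 (Ioi 0)) (nhds 0))
    -- (i) the regularizing estimate
    (t₀ : ℝ) (ht₀ : 0 < t₀) (C : ℝ → ℝ) (hCmeas : Measurable C)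
    (hCpos : ∀ t ∈ Ioc (0:ℝ) t₀, 0 < C t)
    (hCint : IntegrableOn C (Ioc (0:ℝ) t₀))
    (hreg : ∀ t ∈ Ioc (0:ℝ) t₀, ∀ f ∈ PeriodicClass d τ,
      supNorm (fun x => ∫ y, f y ∂(P t x)) +
        holderSeminorm ψ (fun x => ∫ y, f y ∂(P t x)) ≤
          ENNReal.ofReal (C t) * supNorm f)
    -- (ii) exponential decay on centered functions
    (Γ γ : ℝ) (hΓ : 0 < Γ) (hγ : 0 < γ)
    (hdecay : ∀ t : ℝ, 0 ≤ t → ∀ f ∈ PeriodicClass d τ, (∫ x, f x ∂π = 0) →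
      supNorm (fun x => ∫ y, f y ∂(P t x)) ≤
        ENNReal.ofReal (Γ * Real.exp (-γ * t)) * supNorm f)
    -- the function `f` under consideration
    (f : EuclideanSpace ℝ (Fin d) → ℝ) (hf : f ∈ PeriodicClass d τ)
    (hfπ : ∫ x, f x ∂π = 0)
    (hfmeas : ∀ x, Measurable fun t : ℝ => ∫ y, f y ∂(P t x))
    (Rf : EuclideanSpace ℝ (Fin d) → ℝ)
    (hRf : Rf = fun x => ∫ t in Ici (0:ℝ), (∫ y, f y ∂(P t x))) :
    (∀ x, IntegrableOn (fun t : ℝ => ∫ y, f y ∂(P t x)) (Ici (0:ℝ))) ∧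
    supNorm Rf ≤ ENNReal.ofReal (Γ / γ) * supNorm f ∧
    holderSeminorm ψ Rf ≤
      ENNReal.ofReal ((∫ t in Ioc (0:ℝ) t₀, C t) + Γ * C t₀ / γ) * supNorm f ∧
    UniformContinuous Rf := by
  
  classical
  have hfc : Continuous f := hf.1
  obtain ⟨M0, hM0⟩ := hf.2.1
  have hfm : Measurable f := hfc.measurable
  -- the real sup norm of f
  have hbdd : BddAbove (Set.range fun x : EuclideanSpace ℝ (Fin d) => |f x|) :=
    ⟨M0, by rintro _ ⟨x, rfl⟩; exact hM0 x⟩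
  set s : ℝ := ⨆ x : EuclideanSpace ℝ (Fin d), |f x| with hsdef
  have hle_s : ∀ x, |f x| ≤ s := fun x => le_ciSup hbdd x
  have hs0 : 0 ≤ s := le_trans (abs_nonneg _) (hle_s 0)
  have hsup_eq : supNorm f = ENNReal.ofReal s := by
    unfold supNorm
    exact (Monotone.map_ciSup_of_continuousAt ENNReal.continuous_ofReal.continuousAt
      (fun _ _ h => ENNReal.ofReal_le_ofReal h) hbdd).symm
  -- pointwise extraction from supNorm bounds
  have hptS : ∀ (g : EuclideanSpace ℝ (Fin d) → ℝ) (a : ℝ), 0 ≤ a →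
      supNorm g ≤ ENNReal.ofReal a → ∀ x, |g x| ≤ a := by
    intro g a ha hg x
    have h1 : ENNReal.ofReal |g x| ≤ ENNReal.ofReal a :=
      le_trans (le_iSup (fun x => ENNReal.ofReal |g x|) x) hg
    rwa [ENNReal.ofReal_le_ofReal_iff ha] at h1
  -- pointwise extraction from Hölder seminorm bounds
  have hptH : ∀ (g : EuclideanSpace ℝ (Fin d) → ℝ) (a : ℝ), 0 ≤ a →
      holderSeminorm ψ g ≤ ENNReal.ofReal a →
      ∀ x h : EuclideanSpace ℝ (Fin d), 0 < ‖h‖ → ‖h‖ ≤ 1 →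
      |g (x + h) - g x| ≤ a * ψ ‖h‖ := by
    intro g a ha hH x h hn h1
    have hr : 0 < ψ ‖h‖ := hψpos _ ⟨hn, h1⟩
    have h2 : ENNReal.ofReal (|g (x + h) - g x| / ψ ‖h‖) ≤ ENNReal.ofReal a := by
      refine le_trans ?_ hH
      unfold holderSeminorm
      exact le_iSup_of_le x (le_iSup_of_le h (le_iSup_of_le ⟨hn, h1⟩ le_rfl))
    rw [ENNReal.ofReal_le_ofReal_iff ha] at h2
    exact (div_le_iff₀ hr).mp h2
  -- pointwise exponential decay
  have hdec : ∀ t : ℝ, 0 ≤ t → ∀ x,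
      |∫ y, f y ∂(P t x)| ≤ Γ * Real.exp (-γ * t) * s := by
    intro t ht x
    have h1 := hdecay t ht f hf hfπ
    rw [hsup_eq, ← ENNReal.ofReal_mul (by positivity)] at h1
    exact hptS _ _ (by positivity) h1 x
  -- integral of the exponential
  have hexpVal : ∀ a : ℝ, (∫ t in Ioi a, Real.exp (-γ * t)) = Real.exp (-γ * a) / γ := by
    intro a
    have hderiv : ∀ t ∈ Ioi a, HasDerivAt (fun t => -Real.exp (-γ * t) / γ)
        (Real.exp (-γ * t)) t := by
      intro t _
      have h1 : HasDerivAt (fun t : ℝ => -γ * t) (-γ) t := by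
        simpa using (hasDerivAt_id t).const_mul (-γ)
      have h2 : HasDerivAt (fun t : ℝ => Real.exp (-γ * t))
          (Real.exp (-γ * t) * (-γ)) t := (Real.hasDerivAt_exp (-γ * t)).comp t h1
      have h3 := h2.neg.div_const γ
      have he : -(Real.exp (-γ * t) * (-γ)) / γ = Real.exp (-γ * t) := by
        field_simp
      rwa [he] at h3
    have hcont : ContinuousWithinAt (fun t => -Real.exp (-γ * t) / γ) (Ici a) a := by
      have hc : Continuous fun t : ℝ => -Real.exp (-γ * t) / γ :=
        ((Real.continuous_exp.comp (continuous_const.mul continuous_id)).neg).div_const γ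
      exact hc.continuousWithinAt
    have htend : Tendsto (fun t : ℝ => -Real.exp (-γ * t) / γ) atTop (nhds 0) := by
      have h1 : Tendsto (fun t : ℝ => γ * t) atTop atTop :=
        Tendsto.const_mul_atTop hγ tendsto_id
      have h2 : Tendsto (fun t : ℝ => Real.exp (-γ * t)) atTop (nhds 0) := by
        have h2' := Real.tendsto_exp_neg_atTop_nhds_zero.comp h1
        exact h2'.congr fun t => by simp [Function.comp, neg_mul]
      have h3 := h2.neg.div_const γ
      simpa using h3
    have h4 := integral_Ioi_of_hasDerivAt_of_tendsto hcont hderiv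
      (exp_neg_integrableOn_Ioi a hγ) htend
    rw [h4]; ring
  have hexpInt : IntegrableOn (fun t => Real.exp (-γ * t)) (Ici (0:ℝ)) :=
    (integrableOn_Ici_iff_integrableOn_Ioi (f := fun t => Real.exp (-γ * t))).mpr (exp_neg_integrableOn_Ioi 0 hγ)
  -- integrability of t ↦ P_t f x on [0, ∞)
  have hintu : ∀ x, IntegrableOn (fun t : ℝ => ∫ y, f y ∂(P t x)) (Ici (0:ℝ)) := by
    intro x
    refine Integrable.mono' (hexpInt.const_mul (Γ * s))
      ((hfmeas x).aestronglyMeasurable.restrict) ?_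
    filter_upwards [ae_restrict_mem measurableSet_Ici] with t ht
    have h1 := hdec t ht x
    rw [Real.norm_eq_abs]
    nlinarith [Real.exp_pos (-γ * t)]
  -- sup norm bound for Rf
  have hRf_pt : ∀ x, |Rf x| ≤ Γ / γ * s := by
    intro x
    have h1 : ‖∫ t in Ici (0:ℝ), (∫ y, f y ∂(P t x))‖ ≤
        ∫ t in Ici (0:ℝ), Γ * s * Real.exp (-γ * t) := by
      refine norm_integral_le_of_norm_le (hexpInt.const_mul (Γ * s)) ?_
      filter_upwards [ae_restrict_mem measurableSet_Ici] with t ht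
      have h2 := hdec t ht x
      rw [Real.norm_eq_abs]
      nlinarith [Real.exp_pos (-γ * t)]
    rw [Real.norm_eq_abs] at h1
    rw [hRf]
    calc |∫ t in Ici (0:ℝ), (∫ y, f y ∂(P t x))|
        ≤ ∫ t in Ici (0:ℝ), Γ * s * Real.exp (-γ * t) := h1
      _ = Γ * s * ∫ t in Ici (0:ℝ), Real.exp (-γ * t) := integral_const_mul _ _
      _ = Γ * s * (Real.exp (-γ * 0) / γ) := by
          rw [integral_Ici_eq_integral_Ioi, hexpVal 0]
      _ = Γ / γ * s := by
          rw [show -γ * 0 = (0:ℝ) by ring, Real.exp_zero]; ring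
  have hsupRf : supNorm Rf ≤ ENNReal.ofReal (Γ / γ) * supNorm f := by
    rw [hsup_eq, ← ENNReal.ofReal_mul (by positivity)]
    exact iSup_le fun x => ENNReal.ofReal_le_ofReal (hRf_pt x)
  -- Hölder bound on (0, t₀]
  have hA : ∀ t ∈ Ioc (0:ℝ) t₀, ∀ x h : EuclideanSpace ℝ (Fin d), 0 < ‖h‖ → ‖h‖ ≤ 1 →
      |(∫ y, f y ∂(P t (x + h))) - ∫ y, f y ∂(P t x)| ≤ C t * s * ψ ‖h‖ := by
    intro t ht x h hn h1
    have h2 := hreg t ht f hf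
    have h3 : holderSeminorm ψ (fun x => ∫ y, f y ∂(P t x)) ≤
        ENNReal.ofReal (C t * s) := by
      rw [hsup_eq, ← ENNReal.ofReal_mul (hCpos t ht).le] at h2
      exact le_trans le_add_self h2
    exact hptH _ _ (mul_nonneg (hCpos t ht).le hs0) h3 x h hn h1
  -- Hölder bound on (t₀, ∞)
  have hB : ∀ t ∈ Ioi t₀, ∀ x h : EuclideanSpace ℝ (Fin d), 0 < ‖h‖ → ‖h‖ ≤ 1 →
      |(∫ y, f y ∂(P t (x + h))) - ∫ y, f y ∂(P t x)| ≤
        C t₀ * (Γ * Real.exp (-γ * (t - t₀)) * s) * ψ ‖h‖ := by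
    intro t ht x h hn h1
    have hts : (0:ℝ) ≤ t - t₀ := by
      have : t₀ < t := ht
      linarith
    have hgmem : (fun z => ∫ y, f y ∂(P (t - t₀) z)) ∈ PeriodicClass d τ :=
      hPC _ hts f hf
    have hCK' : ∀ z, (∫ y, f y ∂(P t z)) =
        ∫ y, (∫ w, f w ∂(P (t - t₀) y)) ∂(P t₀ z) := by
      intro z
      have h5 := hCK (t - t₀) t₀ hts ht₀.le f hfm ⟨M0, hM0⟩ z
      rwa [show t₀ + (t - t₀) = t by ring] at h5
    have hgdecay := hdecay (t - t₀) hts f hf hfπ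
    rw [hsup_eq, ← ENNReal.ofReal_mul (by positivity)] at hgdecay
    have h2 := hreg t₀ ⟨ht₀, le_refl t₀⟩ _ hgmem
    have h3 : holderSeminorm ψ
        (fun z => ∫ y, (∫ w, f w ∂(P (t - t₀) y)) ∂(P t₀ z)) ≤
        ENNReal.ofReal (C t₀ * (Γ * Real.exp (-γ * (t - t₀)) * s)) := by
      refine le_trans le_add_self (le_trans h2 ?_)
      rw [ENNReal.ofReal_mul (hCpos t₀ ⟨ht₀, le_refl t₀⟩).le]
      exact mul_le_mul_right hgdecay _
    have hnn : 0 ≤ C t₀ * (Γ * Real.exp (-γ * (t - t₀)) * s) := by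
      have := (hCpos t₀ ⟨ht₀, le_refl t₀⟩).le
      positivity
    have h4 := hptH _ _ hnn h3 x h hn h1
    simpa only [← hCK' (x + h), ← hCK' x] using h4
  -- nonnegativity of the Hölder constant
  have hC0 : 0 < C t₀ := hCpos t₀ ⟨ht₀, le_refl t₀⟩
  have hKnonneg : 0 ≤ (∫ t in Ioc (0:ℝ) t₀, C t) + Γ * C t₀ / γ := by
    have h1 : 0 ≤ ∫ t in Ioc (0:ℝ) t₀, C t :=
      setIntegral_nonneg measurableSet_Ioc fun t ht => (hCpos t ht).le
    positivity
  -- exponential tail on (t₀, ∞)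
  have hfun : (fun t : ℝ => Real.exp (-γ * (t - t₀))) =
      fun t => Real.exp (γ * t₀) * Real.exp (-γ * t) := by
    funext t; rw [← Real.exp_add]; congr 1; ring
  have hIexp : IntegrableOn (fun t => Real.exp (-γ * (t - t₀))) (Ioi t₀) := by
    rw [hfun]
    exact (exp_neg_integrableOn_Ioi t₀ hγ).const_mul _
  have hVexp : (∫ t in Ioi t₀, Real.exp (-γ * (t - t₀))) = 1 / γ := by
    rw [hfun, integral_const_mul, hexpVal t₀, ← mul_div_assoc, ← Real.exp_add,
      show γ * t₀ + -γ * t₀ = (0:ℝ) by ring, Real.exp_zero]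
  -- the key Hölder estimate for Rf
  have hkey : ∀ (x h : EuclideanSpace ℝ (Fin d)), 0 < ‖h‖ → ‖h‖ ≤ 1 →
      |Rf (x + h) - Rf x| ≤
        ((∫ t in Ioc (0:ℝ) t₀, C t) + Γ * C t₀ / γ) * s * ψ ‖h‖ := by
    intro x h hn h1
    have hr : 0 < ψ ‖h‖ := hψpos _ ⟨hn, h1⟩
    have hsub : Rf (x + h) - Rf x =
        ∫ t in Ici (0:ℝ), ((∫ y, f y ∂(P t (x + h))) - ∫ y, f y ∂(P t x)) := by
      rw [hRf]
      exact (integral_sub (hintu (x + h)) (hintu x)).symm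
    have hintD : IntegrableOn
        (fun t : ℝ => (∫ y, f y ∂(P t (x + h))) - ∫ y, f y ∂(P t x)) (Ici (0:ℝ)) :=
      (hintu (x + h)).sub (hintu x)
    have hsub1 : Ioc (0:ℝ) t₀ ⊆ Ici (0:ℝ) := fun t ht => ht.1.le
    have hsub2 : Ioi t₀ ⊆ Ici (0:ℝ) := fun t ht => (ht₀.trans ht).le
    have hsplit : (∫ t in Ici (0:ℝ),
          ((∫ y, f y ∂(P t (x + h))) - ∫ y, f y ∂(P t x))) =
        (∫ t in Ioc (0:ℝ) t₀, ((∫ y, f y ∂(P t (x + h))) - ∫ y, f y ∂(P t x))) +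
        ∫ t in Ioi t₀, ((∫ y, f y ∂(P t (x + h))) - ∫ y, f y ∂(P t x)) := by
      rw [integral_Ici_eq_integral_Ioi, ← Ioc_union_Ioi_eq_Ioi ht₀.le,
        setIntegral_union Ioc_disjoint_Ioi_same measurableSet_Ioi
          (hintD.mono_set hsub1) (hintD.mono_set hsub2)]
    have hb1 : |∫ t in Ioc (0:ℝ) t₀,
          ((∫ y, f y ∂(P t (x + h))) - ∫ y, f y ∂(P t x))| ≤
        (∫ t in Ioc (0:ℝ) t₀, C t) * (s * ψ ‖h‖) := by
      have h5 : ‖∫ t in Ioc (0:ℝ) t₀,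
            ((∫ y, f y ∂(P t (x + h))) - ∫ y, f y ∂(P t x))‖ ≤
          ∫ t in Ioc (0:ℝ) t₀, C t * (s * ψ ‖h‖) := by
        refine norm_integral_le_of_norm_le (hCint.mul_const (s * ψ ‖h‖)) ?_
        filter_upwards [ae_restrict_mem measurableSet_Ioc] with t ht
        have h6 := hA t ht x h hn h1
        rw [Real.norm_eq_abs, ← mul_assoc]
        exact h6
      rw [Real.norm_eq_abs, integral_mul_const] at h5
      exact h5
    have hb2 : |∫ t in Ioi t₀,
          ((∫ y, f y ∂(P t (x + h))) - ∫ y, f y ∂(P t x))| ≤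
        C t₀ * Γ * s * ψ ‖h‖ * (1 / γ) := by
      have h5 : ‖∫ t in Ioi t₀,
            ((∫ y, f y ∂(P t (x + h))) - ∫ y, f y ∂(P t x))‖ ≤
          ∫ t in Ioi t₀, C t₀ * Γ * s * ψ ‖h‖ * Real.exp (-γ * (t - t₀)) := by
        refine norm_integral_le_of_norm_le (hIexp.const_mul _) ?_
        filter_upwards [ae_restrict_mem measurableSet_Ioi] with t ht
        have h6 := hB t ht x h hn h1
        rw [Real.norm_eq_abs]
        calc |(∫ y, f y ∂(P t (x + h))) - ∫ y, f y ∂(P t x)| ≤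
            C t₀ * (Γ * Real.exp (-γ * (t - t₀)) * s) * ψ ‖h‖ := h6
          _ = C t₀ * Γ * s * ψ ‖h‖ * Real.exp (-γ * (t - t₀)) := by ring
      rw [Real.norm_eq_abs, integral_const_mul, hVexp] at h5
      linarith
    rw [hsub, hsplit]
    calc |(∫ t in Ioc (0:ℝ) t₀, ((∫ y, f y ∂(P t (x + h))) - ∫ y, f y ∂(P t x))) +
          ∫ t in Ioi t₀, ((∫ y, f y ∂(P t (x + h))) - ∫ y, f y ∂(P t x))| ≤
        |∫ t in Ioc (0:ℝ) t₀, ((∫ y, f y ∂(P t (x + h))) - ∫ y, f y ∂(P t x))| +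
        |∫ t in Ioi t₀, ((∫ y, f y ∂(P t (x + h))) - ∫ y, f y ∂(P t x))| :=
          abs_add_le _ _
      _ ≤ (∫ t in Ioc (0:ℝ) t₀, C t) * (s * ψ ‖h‖) +
          C t₀ * Γ * s * ψ ‖h‖ * (1 / γ) := add_le_add hb1 hb2
      _ = ((∫ t in Ioc (0:ℝ) t₀, C t) + Γ * C t₀ / γ) * s * ψ ‖h‖ := by ring
  -- the Hölder seminorm bound
  have hhold : holderSeminorm ψ Rf ≤
      ENNReal.ofReal ((∫ t in Ioc (0:ℝ) t₀, C t) + Γ * C t₀ / γ) * supNorm f := by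
    rw [hsup_eq, ← ENNReal.ofReal_mul hKnonneg]
    unfold holderSeminorm
    refine iSup_le fun x => iSup_le fun h => iSup_le fun hh => ?_
    refine ENNReal.ofReal_le_ofReal ?_
    have hr : 0 < ψ ‖h‖ := hψpos _ hh
    rw [div_le_iff₀ hr]
    exact hkey x h hh.1 hh.2
  -- uniform continuity
  have hUC : UniformContinuous Rf := by
    rw [Metric.uniformContinuous_iff]
    intro ε hε
    have hK2nn : 0 ≤ ((∫ t in Ioc (0:ℝ) t₀, C t) + Γ * C t₀ / γ) * s :=
      mul_nonneg hKnonneg hs0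
    set K2 : ℝ := ((∫ t in Ioc (0:ℝ) t₀, C t) + Γ * C t₀ / γ) * s with hK2
    have he' : 0 < ε / (K2 + 1) := by positivity
    obtain ⟨δ, hδ, hδ'⟩ := Metric.tendsto_nhdsWithin_nhds.mp hψ0 (ε / (K2 + 1)) he'
    refine ⟨min δ 1, lt_min hδ one_pos, ?_⟩
    intro a b hab
    rcases eq_or_ne a b with rfl | hne
    · simpa using hε
    · have hdist : dist a b = ‖a - b‖ := dist_eq_norm a b
      have hn : 0 < ‖a - b‖ := by
        rw [norm_pos_iff]; exact sub_ne_zero.mpr hne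
      have h1 : ‖a - b‖ ≤ 1 :=
        le_of_lt (lt_of_lt_of_le (hdist ▸ hab) (min_le_right _ _))
      have hlt : ‖a - b‖ < δ := lt_of_lt_of_le (hdist ▸ hab) (min_le_left _ _)
      have hψb : ψ ‖a - b‖ < ε / (K2 + 1) := by
        have h2 := hδ' (mem_Ioi.mpr hn) (by rw [Real.dist_eq, sub_zero, abs_of_pos hn]; exact hlt)
        rwa [Real.dist_eq, sub_zero, abs_of_pos (hψpos _ ⟨hn, h1⟩)] at h2
      have hkb := hkey b (a - b) hn h1
      rw [show b + (a - b) = a by abel] at hkb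
      rw [Real.dist_eq]
      calc |Rf a - Rf b| ≤ K2 * ψ ‖a - b‖ := hkb
        _ ≤ K2 * (ε / (K2 + 1)) := mul_le_mul_of_nonneg_left hψb.le hK2nn
        _ < ε := by
            have hpos : (0:ℝ) < K2 + 1 := by positivity
            have heq : (K2 + 1) * (ε / (K2 + 1)) = ε := by field_simp
            nlinarith [he']
  exact ⟨hintu, hsupRf, hhold, hUC⟩
end
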